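/- arXiv:2604.25653 — 10 statements merged into one kernel-verified Lean document; each statement's English description precedes it below -/
import Mathlib

section
/- For a numerical semigroup S and nonzero a ∈ S, the genus G(S) (the number of positive integers not in S) satisfies G(S) = (1/a)·(∑_{s ∈ Ap(S,a)} s) - (a-1)/2, i.e. 2a·G(S) = 2·∑_{s ∈ Ap(S,a)} s - a(a-1). -/
/-- The Apéry set of a submonoid `S` of `ℕ` with respect to `a`. -/
def AperySet (S : AddSubmonoid ℕ) (a : ℕ) : Set ℕ :=
  {s | s ∈ S ∧ ∀ t ∈ S, t + a ≠ s}

/-- The genus of `S`: the number of natural numbers not in `S`. -/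
noncomputable def Genus (S : AddSubmonoid ℕ) : ℕ :=
  Set.ncard {n : ℕ | n ∉ S}

/-!
For each residue `i < a`, let `w i` be the least element of `S` congruent to `i` modulo `a`.
Since `a ∈ S`, an integer `n ≡ i` lies in `S` exactly when `w i ≤ n`. Hence `Ap(S, a)` consists
of the `a` distinct numbers `w 0, …, w (a - 1)`, and the gaps congruent to `i` are the numbers
below `w i` in that class, of which there are `w i / a`. Writing `w i = a * (w i / a) + i` and
summing over `i` gives `∑ Ap(S, a) = a * G(S) + a * (a - 1) / 2`.
-/

open Finset

section

variable {S : AddSubmonoid ℕ} {a i m n : ℕ}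

/-- The least element of `S` congruent to `i` modulo `a` (junk value `0` when there is none). -/
noncomputable def leastInResidue (S : AddSubmonoid ℕ) (a i : ℕ) : ℕ :=
  sInf {n | n ∈ S ∧ n % a = i}

theorem mem_of_modEq_of_le (haS : a ∈ S) (hm : m ∈ S) (hmn : m ≤ n) (h : m ≡ n [MOD a]) :
    n ∈ S := by
  obtain ⟨k, hk⟩ := (Nat.modEq_iff_dvd' hmn).mp h
  have hn : n = m + k • a := by rw [smul_eq_mul]; lia
  exact hn ▸ S.add_mem hm (S.nsmul_mem haS k)

theorem exists_mem_mod_eq (hfin : (S : Set ℕ)ᶜ.Finite) (hi : i < a) : ∃ n ∈ S, n % a = i := by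
  obtain ⟨M, hM⟩ := hfin.bddAbove
  have hlarge : i + (M + 1) * a ∉ (S : Set ℕ)ᶜ := fun h => by
    have := hM h
    nlinarith
  refine ⟨i + (M + 1) * a, by simpa using hlarge, ?_⟩
  rw [Nat.add_mul_mod_self_right, Nat.mod_eq_of_lt hi]

theorem leastInResidue_spec (hfin : (S : Set ℕ)ᶜ.Finite) (hi : i < a) :
    leastInResidue S a i ∈ S ∧ leastInResidue S a i % a = i :=
  Nat.sInf_mem (exists_mem_mod_eq hfin hi)

theorem leastInResidue_le (hn : n ∈ S) : leastInResidue S a (n % a) ≤ n :=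
  Nat.sInf_le ⟨hn, rfl⟩

theorem mem_iff_leastInResidue_le (hfin : (S : Set ℕ)ᶜ.Finite) (haS : a ∈ S) (ha : 0 < a) :
    n ∈ S ↔ leastInResidue S a (n % a) ≤ n := by
  obtain ⟨hmem, hmod⟩ := leastInResidue_spec (S := S) hfin (Nat.mod_lt n ha)
  exact ⟨leastInResidue_le, fun hle => mem_of_modEq_of_le haS hmem hle hmod⟩

theorem mem_aperySet_iff (hfin : (S : Set ℕ)ᶜ.Finite) (haS : a ∈ S) (ha : 0 < a) :
    n ∈ AperySet S a ↔ n = leastInResidue S a (n % a) := by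
  obtain ⟨hmem, hmod⟩ := leastInResidue_spec (S := S) hfin (Nat.mod_lt n ha)
  constructor
  · rintro ⟨hn, hmin⟩
    refine (leastInResidue_le hn).antisymm' (not_lt.mp fun hlt => ?_)
    -- `n - a` stays in the residue class and above its least element, so `n - a ∈ S`
    have hle := Nat.ModEq.add_le_of_lt hmod hlt
    have hsub : n - a ∈ S := (mem_iff_leastInResidue_le hfin haS ha).mpr <| by
      rw [← Nat.mod_eq_sub_mod (by lia)]
      lia
    exact hmin (n - a) hsub (by lia)
  · intro hn
    refine ⟨hn ▸ hmem, fun t ht hta => ?_⟩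
    have htmod : t % a = n % a := by rw [← hta, Nat.add_mod_right]
    have := htmod ▸ leastInResidue_le ht
    lia

theorem aperySet_eq_image (hfin : (S : Set ℕ)ᶜ.Finite) (haS : a ∈ S) (ha : 0 < a) :
    AperySet S a = ((range a).image (leastInResidue S a) : Set ℕ) := by
  ext n
  simp only [mem_aperySet_iff hfin haS ha, coe_image, coe_range, Set.mem_image, Set.mem_Iio]
  constructor
  · intro hn
    exact ⟨n % a, Nat.mod_lt n ha, hn.symm⟩
  · rintro ⟨i, hi, rfl⟩
    rw [(leastInResidue_spec hfin hi).2]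

theorem finsum_aperySet (hfin : (S : Set ℕ)ᶜ.Finite) (haS : a ∈ S) (ha : 0 < a) :
    ∑ᶠ n ∈ AperySet S a, n = ∑ i ∈ range a, leastInResidue S a i := by
  rw [aperySet_eq_image hfin haS ha, finsum_mem_coe_finset, sum_image]
  intro i hi j hj hij
  rw [← (leastInResidue_spec hfin (mem_range.mp hi)).2,
    ← (leastInResidue_spec hfin (mem_range.mp hj)).2, hij]

theorem gaps_filter_mod_eq (hfin : (S : Set ℕ)ᶜ.Finite) (haS : a ∈ S) (ha : 0 < a)
    (hi : i < a) :
    {n ∈ hfin.toFinset | n % a = i} =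
      {n ∈ range (leastInResidue S a i) | n ≡ leastInResidue S a i [MOD a]} := by
  ext n
  simp only [mem_filter, Set.Finite.mem_toFinset, Set.mem_compl_iff, SetLike.mem_coe, mem_range,
    mem_iff_leastInResidue_le hfin haS ha, not_le, Nat.ModEq, (leastInResidue_spec hfin hi).2]
  exact and_congr_left fun hn => hn ▸ Iff.rfl

theorem genus_eq_sum_div (hfin : (S : Set ℕ)ᶜ.Finite) (haS : a ∈ S) (ha : 0 < a) :
    Genus S = ∑ i ∈ range a, leastInResidue S a i / a := by
  have hmaps : Set.MapsTo (· % a) hfin.toFinset (range a) :=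
    fun n _ => mem_range.mpr (Nat.mod_lt n ha)
  rw [Genus, show {n | n ∉ S} = (S : Set ℕ)ᶜ from rfl, Set.ncard_eq_toFinset_card _ hfin,
    card_eq_sum_card_fiberwise hmaps]
  refine sum_congr rfl fun i hi => ?_
  rw [gaps_filter_mod_eq hfin haS ha (mem_range.mp hi), ← Nat.count_eq_card_filter_range,
    Nat.count_modEq_card _ ha, if_neg (lt_irrefl _), add_zero]

end

theorem genus_eq_apery_sum (S : AddSubmonoid ℕ)
    (hfin : ((S : Set ℕ))ᶜ.Finite) (a : ℕ) (haS : a ∈ S) (ha : 0 < a) :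
    2 * a * Genus S + a * (a - 1) = 2 * ∑ᶠ s ∈ AperySet S a, s := by
  have hdecomp : ∀ i ∈ range a, leastInResidue S a i = a * (leastInResidue S a i / a) + i :=
    fun i hi => by
      conv_lhs => rw [← Nat.div_add_mod (leastInResidue S a i) a]
      rw [(leastInResidue_spec hfin (mem_range.mp hi)).2]
  rw [finsum_aperySet hfin haS ha, sum_congr rfl hdecomp, sum_add_distrib, ← mul_sum,
    genus_eq_sum_div hfin haS ha, ← sum_range_id_mul_two]
  ring
end

section
/- Let S = ⟨d₀,d₁,d₂,d₃⟩ and let a₁₁ be the smallest positive integer such that a₁₁d₁ = a₁₀d₀ + a₁₂d₂ + a₁₃d₃ for some a₁₀,a₁₂,a₁₃ ∈ ℕ, and suppose a₁₀ = 0 for some such representation. Then every element of Ap(S,d₀) can be written as λ₁d₁ + λ₂d₂ + λ₃d₃ with λ₁,λ₂,λ₃ ∈ ℕ and λ₁ < a₁₁. -/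
lemma mem_closure_four (d₀ d₁ d₂ d₃ s : ℕ)
    (hs : s ∈ AddSubmonoid.closure ({d₀, d₁, d₂, d₃} : Set ℕ)) :
    ∃ c₀ c₁ c₂ c₃ : ℕ, s = c₀ * d₀ + c₁ * d₁ + c₂ * d₂ + c₃ * d₃ := by
  induction hs using AddSubmonoid.closure_induction with
  | mem x hx =>
    rcases hx with h | h | h | h
    · exact ⟨1, 0, 0, 0, by simp [h]⟩
    · exact ⟨0, 1, 0, 0, by simp [h]⟩
    · exact ⟨0, 0, 1, 0, by simp [h]⟩
    · exact ⟨0, 0, 0, 1, by simp [Set.mem_singleton_iff.mp h]⟩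
  | zero => exact ⟨0, 0, 0, 0, by simp⟩
  | add x y _ _ ihx ihy =>
    obtain ⟨a, b, c, d, rfl⟩ := ihx
    obtain ⟨a', b', c', d', rfl⟩ := ihy
    exact ⟨a + a', b + b', c + c', d + d', by ring⟩

theorem apery_coeff_lt_of_minimal_relation (d₀ d₁ d₂ d₃ a₁₁ : ℕ)
    (h0 : 0 < d₀) (h1 : 0 < d₁) (h2 : 0 < d₂) (h3 : 0 < d₃)
    (hpos : 0 < a₁₁)
    (hrel : ∃ a₁₂ a₁₃ : ℕ, a₁₁ * d₁ = a₁₂ * d₂ + a₁₃ * d₃)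
    (hmin : ∀ m : ℕ, 0 < m →
      (∃ a₁₀ a₁₂ a₁₃ : ℕ, m * d₁ = a₁₀ * d₀ + a₁₂ * d₂ + a₁₃ * d₃) → a₁₁ ≤ m) :
    ∀ s ∈ AperySet (AddSubmonoid.closure {d₀, d₁, d₂, d₃}) d₀,
      ∃ l₁ l₂ l₃ : ℕ, l₁ < a₁₁ ∧ s = l₁ * d₁ + l₂ * d₂ + l₃ * d₃ := by
  rintro s ⟨hsS, hAp⟩
  obtain ⟨c₀, c₁, c₂, c₃, rfl⟩ := mem_closure_four d₀ d₁ d₂ d₃ _ hsS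
  -- c₀ must be 0
  have hc₀ : c₀ = 0 := by
    by_contra h
    obtain ⟨k, rfl⟩ : ∃ k, c₀ = k + 1 := ⟨c₀ - 1, by omega⟩
    have ht : (k * d₀ + c₁ * d₁ + c₂ * d₂ + c₃ * d₃) ∈
        AddSubmonoid.closure ({d₀, d₁, d₂, d₃} : Set ℕ) := by
      have h0' : d₀ ∈ AddSubmonoid.closure ({d₀, d₁, d₂, d₃} : Set ℕ) :=
        AddSubmonoid.subset_closure (by simp)
      have h1' : d₁ ∈ AddSubmonoid.closure ({d₀, d₁, d₂, d₃} : Set ℕ) :=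
        AddSubmonoid.subset_closure (by simp)
      have h2' : d₂ ∈ AddSubmonoid.closure ({d₀, d₁, d₂, d₃} : Set ℕ) :=
        AddSubmonoid.subset_closure (by simp)
      have h3' : d₃ ∈ AddSubmonoid.closure ({d₀, d₁, d₂, d₃} : Set ℕ) :=
        AddSubmonoid.subset_closure (by simp)
      exact AddSubmonoid.add_mem _ (AddSubmonoid.add_mem _ (AddSubmonoid.add_mem _
        (AddSubmonoid.nsmul_mem _ h0' k) (AddSubmonoid.nsmul_mem _ h1' c₁))
        (AddSubmonoid.nsmul_mem _ h2' c₂)) (AddSubmonoid.nsmul_mem _ h3' c₃)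
    exact hAp _ ht (by ring)
  subst hc₀
  obtain ⟨a₁₂, a₁₃, hr⟩ := hrel
  refine ⟨c₁ % a₁₁, c₂ + (c₁ / a₁₁) * a₁₂, c₃ + (c₁ / a₁₁) * a₁₃,
    Nat.mod_lt _ hpos, ?_⟩
  have hc₁ : c₁ = a₁₁ * (c₁ / a₁₁) + c₁ % a₁₁ := (Nat.div_add_mod c₁ a₁₁).symm
  calc 0 * d₀ + c₁ * d₁ + c₂ * d₂ + c₃ * d₃
      = (c₁ / a₁₁) * (a₁₁ * d₁) + (c₁ % a₁₁ * d₁ + c₂ * d₂ + c₃ * d₃) := by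
        nth_rewrite 1 [hc₁]; ring
    _ = (c₁ / a₁₁) * (a₁₂ * d₂ + a₁₃ * d₃) + (c₁ % a₁₁ * d₁ + c₂ * d₂ + c₃ * d₃) := by
        rw [hr]
    _ = c₁ % a₁₁ * d₁ + (c₂ + (c₁ / a₁₁) * a₁₂) * d₂ + (c₃ + (c₁ / a₁₁) * a₁₃) * d₃ := by
        ring
end

section
/- Let S = ⟨d₀,d₁,d₂,d₃⟩ and for i=1,2,3 let a_{ii} be the smallest positive integer such that a_{ii}d_i is a nonnegative integer combination of the other three generators. If λ_i, λ_i' ∈ ℕ with λ_i, λ_i' < a_{ii} for i = 1,2,3 and λ₁d₁ + λ₂d₂ + λ₃d₃ = λ₁'d₁ + λ₂'d₂ + λ₃'d₃, then (λ₁,λ₂,λ₃) = (λ₁',λ₂',λ₃'). -/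
/-!
The differences `lᵢ - lᵢ'` satisfy `∑ (lᵢ - lᵢ') dᵢ = 0` and `|lᵢ - lᵢ'| < aᵢ`. Among three
integers either all have the same sign, or one has the sign opposite to the other two; in the
latter case that one isolates a multiple `c dᵢ` with `0 ≤ c < aᵢ` lying in the semigroup generated
by the other two generators, so `c = 0` by minimality of `aᵢ`. In both cases the positivity of
the `dᵢ` then forces every difference to vanish.
-/

theorem mul_add_mul_mem_closure {s : Set ℕ} {x y : ℕ} (hx : x ∈ s) (hy : y ∈ s) (p q : ℕ) :
    p * x + q * y ∈ AddSubmonoid.closure s :=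
  add_mem (nsmul_mem (AddSubmonoid.subset_closure hx) p)
    (nsmul_mem (AddSubmonoid.subset_closure hy) q)

theorem eq_zero_of_mul_eq_of_lt_of_minimal {s : Set ℕ} {a d x y : ℕ} (hx : x ∈ s) (hy : y ∈ s)
    (hmin : ∀ m : ℕ, 0 < m → m * d ∈ AddSubmonoid.closure s → a ≤ m) {c p q : ℕ} (hc : c < a)
    (h : c * d = p * x + q * y) : c = 0 := by
  by_contra hc0
  have := hmin c (Nat.pos_of_ne_zero hc0) (h ▸ mul_add_mul_mem_closure hx hy p q)
  omega

theorem eq_of_add_add_eq_of_minimal {d₁ d₂ d₃ a₁ a₂ a₃ : ℕ}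
    (h1 : 0 < d₁) (h2 : 0 < d₂) (h3 : 0 < d₃)
    (hmin₁ : ∀ c p q : ℕ, c < a₁ → c * d₁ = p * d₂ + q * d₃ → c = 0)
    (hmin₂ : ∀ c p q : ℕ, c < a₂ → c * d₂ = p * d₁ + q * d₃ → c = 0)
    (hmin₃ : ∀ c p q : ℕ, c < a₃ → c * d₃ = p * d₁ + q * d₂ → c = 0)
    {l₁ l₂ l₃ l₁' l₂' l₃' : ℕ}
    (hb1 : l₁ < a₁) (hb2 : l₂ < a₂) (hb3 : l₃ < a₃)
    (hb1' : l₁' < a₁) (hb2' : l₂' < a₂) (hb3' : l₃' < a₃)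
    (heq : l₁ * d₁ + l₂ * d₂ + l₃ * d₃ = l₁' * d₁ + l₂' * d₂ + l₃' * d₃) :
    l₁ = l₁' ∧ l₂ = l₂' ∧ l₃ = l₃' := by
  wlog p1 : l₁' ≤ l₁ generalizing l₁ l₂ l₃ l₁' l₂' l₃'
  · obtain ⟨e₁, e₂, e₃⟩ := this hb1' hb2' hb3' hb1 hb2 hb3 heq.symm (by omega)
    exact ⟨e₁.symm, e₂.symm, e₃.symm⟩
  have heqz : (l₁ * d₁ + l₂ * d₂ + l₃ * d₃ : ℤ) = l₁' * d₁ + l₂' * d₂ + l₃' * d₃ := by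
    exact_mod_cast heq
  have hd : d₁ ≠ 0 ∧ d₂ ≠ 0 ∧ d₃ ≠ 0 := ⟨h1.ne', h2.ne', h3.ne'⟩
  rcases le_total l₂' l₂ with p2 | p2 <;> rcases le_total l₃' l₃ with p3 | p3
  · have e : (l₁ - l₁') * d₁ + (l₂ - l₂') * d₂ + (l₃ - l₃') * d₃ = 0 := by
      zify [p1, p2, p3]; linear_combination heqz
    simp only [Nat.add_eq_zero_iff, mul_eq_zero, hd, or_false] at e
    omega
  · have e : (l₃' - l₃) * d₃ = (l₁ - l₁') * d₁ + (l₂ - l₂') * d₂ := by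
      zify [p1, p2, p3]; linear_combination -heqz
    have c3 := hmin₃ _ _ _ (by omega) e
    rw [c3, zero_mul, eq_comm] at e
    simp only [Nat.add_eq_zero_iff, mul_eq_zero, hd, or_false] at e
    omega
  · have e : (l₂' - l₂) * d₂ = (l₁ - l₁') * d₁ + (l₃ - l₃') * d₃ := by
      zify [p1, p2, p3]; linear_combination -heqz
    have c2 := hmin₂ _ _ _ (by omega) e
    rw [c2, zero_mul, eq_comm] at e
    simp only [Nat.add_eq_zero_iff, mul_eq_zero, hd, or_false] at e
    omega
  · have e : (l₁ - l₁') * d₁ = (l₂' - l₂) * d₂ + (l₃' - l₃) * d₃ := by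
      zify [p1, p2, p3]; linear_combination heqz
    have c1 := hmin₁ _ _ _ (by omega) e
    rw [c1, zero_mul, eq_comm] at e
    simp only [Nat.add_eq_zero_iff, mul_eq_zero, hd, or_false] at e
    omega

theorem unique_bounded_representation_general (d₀ d₁ d₂ d₃ : ℕ)
    (h1 : 0 < d₁) (h2 : 0 < d₂) (h3 : 0 < d₃)
    (a₁ a₂ a₃ : ℕ)
    (ha1min : ∀ m : ℕ, 0 < m → m * d₁ ∈ AddSubmonoid.closure ({d₀, d₂, d₃} : Set ℕ) → a₁ ≤ m)
    (ha2min : ∀ m : ℕ, 0 < m → m * d₂ ∈ AddSubmonoid.closure ({d₀, d₁, d₃} : Set ℕ) → a₂ ≤ m)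
    (ha3min : ∀ m : ℕ, 0 < m → m * d₃ ∈ AddSubmonoid.closure ({d₀, d₁, d₂} : Set ℕ) → a₃ ≤ m)
    (l₁ l₂ l₃ l₁' l₂' l₃' : ℕ)
    (hb1 : l₁ < a₁) (hb2 : l₂ < a₂) (hb3 : l₃ < a₃)
    (hb1' : l₁' < a₁) (hb2' : l₂' < a₂) (hb3' : l₃' < a₃)
    (heq : l₁ * d₁ + l₂ * d₂ + l₃ * d₃ = l₁' * d₁ + l₂' * d₂ + l₃' * d₃) :
    l₁ = l₁' ∧ l₂ = l₂' ∧ l₃ = l₃' :=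
  eq_of_add_add_eq_of_minimal h1 h2 h3
    (fun _ _ _ hc ↦ eq_zero_of_mul_eq_of_lt_of_minimal (by simp) (by simp) ha1min hc)
    (fun _ _ _ hc ↦ eq_zero_of_mul_eq_of_lt_of_minimal (by simp) (by simp) ha2min hc)
    (fun _ _ _ hc ↦ eq_zero_of_mul_eq_of_lt_of_minimal (by simp) (by simp) ha3min hc)
    hb1 hb2 hb3 hb1' hb2' hb3' heq

theorem unique_bounded_representation (d₀ d₁ d₂ d₃ : ℕ)
    (h0 : 0 < d₀) (h1 : 0 < d₁) (h2 : 0 < d₂) (h3 : 0 < d₃)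
    (a₁ a₂ a₃ : ℕ)
    (ha1 : 0 < a₁) (ha1mem : a₁ * d₁ ∈ AddSubmonoid.closure ({d₀, d₂, d₃} : Set ℕ))
    (ha1min : ∀ m : ℕ, 0 < m → m * d₁ ∈ AddSubmonoid.closure ({d₀, d₂, d₃} : Set ℕ) → a₁ ≤ m)
    (ha2 : 0 < a₂) (ha2mem : a₂ * d₂ ∈ AddSubmonoid.closure ({d₀, d₁, d₃} : Set ℕ))
    (ha2min : ∀ m : ℕ, 0 < m → m * d₂ ∈ AddSubmonoid.closure ({d₀, d₁, d₃} : Set ℕ) → a₂ ≤ m)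
    (ha3 : 0 < a₃) (ha3mem : a₃ * d₃ ∈ AddSubmonoid.closure ({d₀, d₁, d₂} : Set ℕ))
    (ha3min : ∀ m : ℕ, 0 < m → m * d₃ ∈ AddSubmonoid.closure ({d₀, d₁, d₂} : Set ℕ) → a₃ ≤ m)
    (l₁ l₂ l₃ l₁' l₂' l₃' : ℕ)
    (hb1 : l₁ < a₁) (hb2 : l₂ < a₂) (hb3 : l₃ < a₃)
    (hb1' : l₁' < a₁) (hb2' : l₂' < a₂) (hb3' : l₃' < a₃)
    (heq : l₁ * d₁ + l₂ * d₂ + l₃ * d₃ = l₁' * d₁ + l₂' * d₂ + l₃' * d₃) :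
    l₁ = l₁' ∧ l₂ = l₂' ∧ l₃ = l₃' :=
  unique_bounded_representation_general d₀ d₁ d₂ d₃ h1 h2 h3 a₁ a₂ a₃ ha1min ha2min ha3min l₁ l₂ l₃
    l₁' l₂' l₃' hb1 hb2 hb3 hb1' hb2' hb3' heq
end

section
/- Let S be a numerical semigroup minimally generated by d₀,...,d_k, and let b be a Betti element of S. Then for every index i there exists an element s ∈ Ap(S, d_i) and an index j ≠ i such that b = s + d_j. -/
/-- The factorization map: `z ↦ ∑ i, z i * d i`. -/
def fac {k : ℕ} (d : Fin (k + 1) → ℕ) (z : Fin (k + 1) → ℕ) : ℕ :=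
  ∑ i, z i * d i

/-- Two factorizations of `b` are `ℛ`-related if they are joined by a chain of
factorizations of `b` with consecutive members having overlapping supports. -/
def RRel {k : ℕ} (d : Fin (k + 1) → ℕ) (b : ℕ) (z z' : Fin (k + 1) → ℕ) : Prop :=
  Relation.ReflTransGen (fun u v => fac d v = b ∧ ∃ i, u i ≠ 0 ∧ v i ≠ 0) z z'

/-- `b` is a Betti element: it has two factorizations that are not `ℛ`-related. -/
def IsBetti {k : ℕ} (d : Fin (k + 1) → ℕ) (b : ℕ) : Prop :=
  ∃ z z' : Fin (k + 1) → ℕ, fac d z = b ∧ fac d z' = b ∧ ¬ RRel d b z z'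

lemma fac_add {k} (d x y : Fin (k+1) → ℕ) : fac d (x + y) = fac d x + fac d y := by
  simp [fac, add_mul, Finset.sum_add_distrib]

lemma fac_single {k} (d : Fin (k+1) → ℕ) (j : Fin (k+1)) (c : ℕ) :
    fac d (Pi.single j c) = c * d j := by
  simp [fac, Pi.single_apply, ite_mul]

lemma fac_mem {k} (d : Fin (k+1) → ℕ) (z : Fin (k+1) → ℕ) :
    fac d z ∈ AddSubmonoid.closure (Set.range d) := by
  refine AddSubmonoid.sum_mem _ fun i _ => ?_
  exact
    AddSubmonoid.nsmul_mem _ (AddSubmonoid.subset_closure (Set.mem_range_self i)) (z i)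

lemma exists_fac {k} (d : Fin (k+1) → ℕ) {t : ℕ}
    (ht : t ∈ AddSubmonoid.closure (Set.range d)) : ∃ τ, fac d τ = t := by
  induction ht using AddSubmonoid.closure_induction with
  | mem x hx => obtain ⟨j, rfl⟩ := hx; exact ⟨Pi.single j 1, by simp [fac_single]⟩
  | zero => exact ⟨0, by simp [fac]⟩
  | add x y _ _ hx hy =>
      obtain ⟨a, rfl⟩ := hx; obtain ⟨c, rfl⟩ := hy; exact ⟨a + c, fac_add d a c⟩

theorem betti_eq_apery_add_generator {k : ℕ} (d : Fin (k + 1) → ℕ)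
    (hpos : ∀ i, 0 < d i)
    (hmin : ∀ i, d i ∉ AddSubmonoid.closure (Set.range d \ {d i}))
    (b : ℕ) (hb : IsBetti d b) :
    ∀ i : Fin (k + 1), ∃ s ∈ AperySet (AddSubmonoid.closure (Set.range d)) (d i),
      ∃ j : Fin (k + 1), j ≠ i ∧ b = s + d j := by
  intro i
  by_contra H
  push_neg at H
  obtain ⟨z, z', hz, hz', hR⟩ := hb
  -- b is nonzero: otherwise z = z' = 0, which are trivially related.
  have hb0 : b ≠ 0 := by
    rintro rfl
    have hzero : ∀ (v : Fin (k+1) → ℕ), fac d v = 0 → v = 0 := by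
      intro v hv
      funext m
      have h1 := (Finset.sum_eq_zero_iff.mp hv) m (Finset.mem_univ m)
      have h2 := hpos m
      simp only [Pi.zero_apply]
      rcases Nat.mul_eq_zero.mp h1 with h | h
      · exact h
      · omega
    rw [hzero z hz, hzero z' hz'] at hR
    exact hR Relation.ReflTransGen.refl
  -- Key step: every factorization of b is one step away from one supported at i.
  have key : ∀ v, fac d v = b →
      ∃ u, fac d u = b ∧ u i ≠ 0 ∧ (u = v ∨ ∃ m, v m ≠ 0 ∧ u m ≠ 0) := by
    intro v hv
    by_cases hvi : v i ≠ 0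
    · exact ⟨v, hv, hvi, Or.inl rfl⟩
    push_neg at hvi
    obtain ⟨j, hj⟩ : ∃ j, v j ≠ 0 := by
      by_contra hall
      push_neg at hall
      exact hb0 (by rw [← hv]; simp [fac, hall])
    have hji : j ≠ i := fun h => hj (h ▸ hvi)
    set w : Fin (k+1) → ℕ := Function.update v j (v j - 1) with hw
    have hvw : v = w + Pi.single j 1 := by
      funext m
      by_cases hm : m = j
      · subst hm
        simp [hw, Nat.sub_add_cancel (Nat.one_le_iff_ne_zero.mpr hj)]
      · simp [hw, Function.update_of_ne hm, Pi.single_apply, hm]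
    have hbw : b = fac d w + d j := by
      rw [← hv, hvw, fac_add, fac_single, one_mul]
    have hnotAp : fac d w ∉ AperySet (AddSubmonoid.closure (Set.range d)) (d i) :=
      fun hAp => H _ hAp j hji hbw
    have hex : ∃ t ∈ AddSubmonoid.closure (Set.range d), t + d i = fac d w := by
      by_contra h
      push_neg at h
      exact hnotAp ⟨fac_mem d w, h⟩
    obtain ⟨t, htS, hts⟩ := hex
    obtain ⟨τ, rfl⟩ := exists_fac d htS
    refine ⟨τ + Pi.single i 1 + Pi.single j 1, ?_, ?_, Or.inr ⟨j, hj, ?_⟩⟩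
    · rw [fac_add, fac_add, fac_single, fac_single, one_mul, one_mul]
      omega
    · simp [Pi.single_apply, hji]
    · simp [Pi.single_apply]
  obtain ⟨u, hu, hui, hcu⟩ := key z hz
  obtain ⟨u', hu', hui', hcu'⟩ := key z' hz'
  -- Assemble the chain z ⟶ u ⟶ u' ⟶ z', contradicting non-relatedness.
  have s1 : RRel d b z u := by
    rcases hcu with rfl | ⟨m, hm1, hm2⟩
    · exact Relation.ReflTransGen.refl
    · exact Relation.ReflTransGen.single ⟨hu, m, hm1, hm2⟩
  have s2 : RRel d b z u' := s1.tail ⟨hu', i, hui, hui'⟩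
  have s3 : RRel d b z z' := by
    rcases hcu' with rfl | ⟨m, hm1, hm2⟩
    · exact s2
    · exact s2.tail ⟨hz', m, hm2, hm1⟩
  exact hR s3
end

section
/- For every positive integer k, the Frobenius number of the numerical semigroup generated by binomial(6k+1,2), binomial(6k+2,2), binomial(6k+3,2), binomial(6k+4,2) (with k > 1) equals 72k³ + 66k² + 15k − 1. -/
/-- The Frobenius number of `S`: the largest natural number not in `S`. -/
noncomputable def frobNum (S : AddSubmonoid ℕ) : ℕ :=
  sSup {n : ℕ | n ∉ S}

private lemma mem_closure4 {A B C D n : ℕ} :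
    n ∈ AddSubmonoid.closure ({A, B, C, D} : Set ℕ) ↔
      ∃ x y z w : ℕ, n = x * A + y * B + z * C + w * D := by
  constructor
  · intro hn
    induction hn using AddSubmonoid.closure_induction with
    | mem g hg =>
      simp only [Set.mem_insert_iff, Set.mem_singleton_iff] at hg
      rcases hg with rfl | rfl | rfl | rfl
      · exact ⟨1, 0, 0, 0, by ring⟩
      · exact ⟨0, 1, 0, 0, by ring⟩
      · exact ⟨0, 0, 1, 0, by ring⟩
      · exact ⟨0, 0, 0, 1, by ring⟩
    | zero => exact ⟨0, 0, 0, 0, by ring⟩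
    | add a b _ _ ha hb =>
      obtain ⟨x1,y1,z1,w1,rfl⟩ := ha
      obtain ⟨x2,y2,z2,w2,rfl⟩ := hb
      exact ⟨x1+x2, y1+y2, z1+z2, w1+w2, by ring⟩
  · rintro ⟨x, y, z, w, rfl⟩
    have h : ∀ g ∈ ({A,B,C,D} : Set ℕ), g ∈ AddSubmonoid.closure ({A,B,C,D} : Set ℕ) :=
      fun g hg => AddSubmonoid.subset_closure hg
    refine add_mem (add_mem (add_mem ?_ ?_) ?_) ?_
    · simpa [smul_eq_mul] using nsmul_mem (h A (by simp)) x
    · simpa [smul_eq_mul] using nsmul_mem (h B (by simp)) y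
    · simpa [smul_eq_mul] using nsmul_mem (h C (by simp)) z
    · simpa [smul_eq_mul] using nsmul_mem (h D (by simp)) w

private lemma nonmem4 (k x y z w : ℕ) (hk : 2 ≤ k) :
    72*k^3 + 66*k^2 + 15*k ≠
      x*(18*k^2+3*k) + y*(18*k^2+9*k+1) + z*(18*k^2+15*k+3) + w*(18*k^2+21*k+6) + 1 := by
  intro h
  have hZ : (72*(k:ℤ)^3 + 66*(k:ℤ)^2 + 15*(k:ℤ)) =
      (x:ℤ)*(18*(k:ℤ)^2+3*k) + (y:ℤ)*(18*(k:ℤ)^2+9*k+1) + (z:ℤ)*(18*(k:ℤ)^2+15*k+3)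
        + (w:ℤ)*(18*(k:ℤ)^2+21*k+6) + 1 := by exact_mod_cast h
  have hk0 : (2:ℤ) ≤ (k:ℤ) := by exact_mod_cast hk
  have hx0 : (0:ℤ) ≤ (x:ℤ) := Int.natCast_nonneg x
  have hy0 : (0:ℤ) ≤ (y:ℤ) := Int.natCast_nonneg y
  have hz0 : (0:ℤ) ≤ (z:ℤ) := Int.natCast_nonneg z
  have hw0 : (0:ℤ) ≤ (w:ℤ) := Int.natCast_nonneg w
  have hdvd : (6*(k:ℤ)+1) ∣ ((z:ℤ) + 3*(w:ℤ) + 2) := by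
    refine ⟨12*(k:ℤ)^2+9*k+1 - (3*k*x + (3*k+1)*y + (3*k+2)*z + (3*k+3)*w), ?_⟩
    linear_combination -hZ
  obtain ⟨J, hJ⟩ := hdvd
  have hJ1 : 1 ≤ J := by nlinarith
  have hUeq : (6*(k:ℤ)+1) * (3*(k:ℤ)*x + (3*(k:ℤ)+1)*y + (3*(k:ℤ)+2)*z + (3*(k:ℤ)+3)*w + J)
      = (6*(k:ℤ)+1) * (12*(k:ℤ)^2+9*(k:ℤ)+1) := by linear_combination -hZ - hJ
  have hU : (3*(k:ℤ)*x + (3*(k:ℤ)+1)*y + (3*(k:ℤ)+2)*z + (3*(k:ℤ)+3)*w + J)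
      = 12*(k:ℤ)^2+9*(k:ℤ)+1 := mul_left_cancel₀ (by positivity) hUeq
  set M : ℤ := 4*(k:ℤ) + 3 - ((x:ℤ)+(y:ℤ)+(z:ℤ)+(w:ℤ)) with hMdef
  have hyz : (y:ℤ) + (z:ℤ) + J*(6*(k:ℤ)+2) = 3*(k:ℤ)*M + 3 := by
    rw [hMdef]; linear_combination hU - hJ
  have key : 3*M*(2*(k:ℤ)+1) ≤ 12*(k:ℤ) + 5 + 3*J*(2*(k:ℤ)+1) := by
    nlinarith [hyz, hJ]
  have hMJ : M ≤ J + 1 := by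
    by_contra hc
    push_neg at hc
    have h2 : J + 2 ≤ M := by omega
    nlinarith [mul_le_mul_of_nonneg_right h2 (show (0:ℤ) ≤ 6*(k:ℤ)+3 by linarith)]
  have hJcase : J = 1 ∨ 2 ≤ J := by omega
  rcases hJcase with rfl | hJ2
  · have hM2 : 2 ≤ M := by
      by_contra hc
      push_neg at hc
      have h1 : M ≤ 1 := by omega
      linarith [mul_le_mul_of_nonneg_left h1 (show (0:ℤ) ≤ 3*(k:ℤ) by linarith), hyz]
    have hMe : M = 2 := le_antisymm (by linarith) hM2
    rw [hMe] at hyz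
    have e1 : (z:ℤ) + 3*(w:ℤ) = 6*(k:ℤ) - 1 := by linarith
    have e2 : (y:ℤ) + (z:ℤ) = 1 := by linarith
    omega
  · linarith [mul_le_mul_of_nonneg_right (show (2:ℤ) ≤ J from hJ2)
        (show (0:ℤ) ≤ 3*(k:ℤ) by linarith),
      mul_le_mul_of_nonneg_right hMJ (show (0:ℤ) ≤ 3*(k:ℤ) by linarith), hyz, hy0, hz0]

private lemma cost_mod4 (k n y z w : ℕ)
    (h1 : z + 3*w ≡ n [MOD 6*k+1])
    (h2 : y + 3*z + 6*w ≡ n [MOD 3*k]) :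
    y*(18*k^2+9*k+1) + z*(18*k^2+15*k+3) + w*(18*k^2+21*k+6) ≡ n [MOD 3*k*(6*k+1)] := by
  have hcop : Nat.Coprime (3*k) (6*k+1) := by
    have e : 6*k+1 = 1 + (3*k)*2 := by ring
    rw [e, Nat.coprime_add_mul_left_right]
    exact Nat.coprime_one_right _
  refine (Nat.modEq_and_modEq_iff_modEq_mul hcop).mp ⟨?_, ?_⟩
  · have hb : (18*k^2+9*k+1 : ℕ) ≡ 1 [MOD 3*k] := by
      have e : 18*k^2+9*k+1 = 1 + 3*k*(6*k+3) := by ring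
      rw [e]; exact Nat.add_mul_mod_self_left 1 (3*k) (6*k+3)
    have hc : (18*k^2+15*k+3 : ℕ) ≡ 3 [MOD 3*k] := by
      have e : 18*k^2+15*k+3 = 3 + 3*k*(6*k+5) := by ring
      rw [e]; exact Nat.add_mul_mod_self_left 3 (3*k) (6*k+5)
    have hd : (18*k^2+21*k+6 : ℕ) ≡ 6 [MOD 3*k] := by
      have e : 18*k^2+21*k+6 = 6 + 3*k*(6*k+7) := by ring
      rw [e]; exact Nat.add_mul_mod_self_left 6 (3*k) (6*k+7)
    calc y*(18*k^2+9*k+1) + z*(18*k^2+15*k+3) + w*(18*k^2+21*k+6)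
        ≡ y*1 + z*3 + w*6 [MOD 3*k] := ((hb.mul_left y).add (hc.mul_left z)).add (hd.mul_left w)
      _ = y + 3*z + 6*w := by ring
      _ ≡ n [MOD 3*k] := h2
  · have hb : (18*k^2+9*k+1 : ℕ) ≡ 0 [MOD 6*k+1] := by
      have e : 18*k^2+9*k+1 = 0 + (6*k+1)*(3*k+1) := by ring
      rw [e]; exact Nat.add_mul_mod_self_left 0 (6*k+1) (3*k+1)
    have hc : (18*k^2+15*k+3 : ℕ) ≡ 1 [MOD 6*k+1] := by
      have e : 18*k^2+15*k+3 = 1 + (6*k+1)*(3*k+2) := by ring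
      rw [e]; exact Nat.add_mul_mod_self_left 1 (6*k+1) (3*k+2)
    have hd : (18*k^2+21*k+6 : ℕ) ≡ 3 [MOD 6*k+1] := by
      have e : 18*k^2+21*k+6 = 3 + (6*k+1)*(3*k+3) := by ring
      rw [e]; exact Nat.add_mul_mod_self_left 3 (6*k+1) (3*k+3)
    calc y*(18*k^2+9*k+1) + z*(18*k^2+15*k+3) + w*(18*k^2+21*k+6)
        ≡ y*0 + z*1 + w*3 [MOD 6*k+1] := ((hb.mul_left y).add (hc.mul_left z)).add (hd.mul_left w)
      _ = z + 3*w := by ring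
      _ ≡ n [MOD 6*k+1] := h1

private lemma cost_lemma4 (k n : ℕ) (hk : 2 ≤ k) :
    ∃ y z w : ℕ,
      (y*(18*k^2+9*k+1) + z*(18*k^2+15*k+3) + w*(18*k^2+21*k+6) + 1 ≤ 72*k^3+84*k^2+18*k) ∧
      y*(18*k^2+9*k+1) + z*(18*k^2+15*k+3) + w*(18*k^2+21*k+6) ≡ n [MOD 3*k*(6*k+1)] := by
  have hk0 : (0:ℤ) ≤ (k:ℤ) := Int.natCast_nonneg k
  have hk2 : (2:ℤ) ≤ (k:ℤ) := by exact_mod_cast hk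
  have hksq : (0:ℤ) ≤ (k:ℤ)^2 := sq_nonneg _
  set B := n % (6*k+1) with hBdef
  have hBlt : B < 6*k+1 := Nat.mod_lt _ (by omega)
  have hBn : B ≡ n [MOD 6*k+1] := Nat.mod_modEq n (6*k+1)
  by_cases hsm : B ≤ 3*k-2
  · set z := B % 3 with hzdef
    set w := B / 3 with hwdef
    set y := (n + 9*k - (3*z + 6*w)) % (3*k) with hydef
    have hzw : z + 3*w = B := by omega
    have hylt : y < 3*k := Nat.mod_lt _ (by omega)
    refine ⟨y, z, w, ?_, cost_mod4 k n y z w (by rw [hzw]; exact hBn) ?_⟩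
    · have hy' : (y:ℤ) + 1 ≤ 3*(k:ℤ) := by exact_mod_cast hylt
      have hz' : (z:ℤ) ≤ 2 := by exact_mod_cast (by omega : z ≤ 2)
      have hw' : (w:ℤ) + 1 ≤ (k:ℤ) := by exact_mod_cast (by omega : w + 1 ≤ k)
      zify
      linarith [mul_le_mul_of_nonneg_right (by linarith : (y:ℤ) ≤ 3*(k:ℤ)-1)
          (by positivity : (0:ℤ) ≤ 18*(k:ℤ)^2+9*(k:ℤ)+1),
        mul_le_mul_of_nonneg_right hz' (by positivity : (0:ℤ) ≤ 18*(k:ℤ)^2+15*(k:ℤ)+3),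
        mul_le_mul_of_nonneg_right (by linarith : (w:ℤ) ≤ (k:ℤ)-1)
          (by positivity : (0:ℤ) ≤ 18*(k:ℤ)^2+21*(k:ℤ)+6)]
    · have hy1 : y ≡ n + 9*k - (3*z + 6*w) [MOD 3*k] := Nat.mod_modEq _ _
      have hy2 : y + (3*z + 6*w) ≡ n + 9*k [MOD 3*k] := by
        calc y + (3*z + 6*w) ≡ (n + 9*k - (3*z + 6*w)) + (3*z + 6*w) [MOD 3*k] :=
              hy1.add_right _
          _ = n + 9*k := by omega
      have hy3 : n + 9*k ≡ n [MOD 3*k] := by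
        have e : n + 9*k = n + 3*k*3 := by ring
        rw [e]; exact Nat.add_mul_mod_self_left n (3*k) 3
      have h := hy2.trans hy3
      rwa [← add_assoc] at h
  · push_neg at hsm
    set q := n / 3 with hqdef
    have hn3 : 3*q + n % 3 = n := by omega
    set D := B / 3 with hDdef
    set ws := (B + q*(k-1)) % k with hwsdef
    have hwslt : ws < k := Nat.mod_lt _ (by omega)
    have hDk : k - 1 ≤ D := by omega
    set t := (D - ws) / k with htdef
    set s := (D - ws) % k with hsdef
    have hts : k*t + s = D - ws := Nat.div_add_mod (D - ws) k
    have hslt : s < k := Nat.mod_lt _ (by omega)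
    set w := ws + k*t with hwdef
    have hwD : w + s = D := by omega
    set z := B - 3*w with hzdef
    have hzw : z + 3*w = B := by omega
    set y := n % 3 with hydef
    have hzb : z ≤ 3*(k-1) + B % 3 := by omega
    refine ⟨y, z, w, ?_, cost_mod4 k n y z w (by rw [hzw]; exact hBn) ?_⟩
    · have hy' : (y:ℤ) ≤ 2 := by exact_mod_cast (by omega : y ≤ 2)
      have hzwB : (z:ℤ) + 3*(w:ℤ) = (B:ℤ) := by exact_mod_cast hzw
      have hr3 : B % 3 = 0 ∨ B % 3 = 1 ∨ B % 3 = 2 := by omega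
      have H1 := mul_le_mul_of_nonneg_right hy'
        (by positivity : (0:ℤ) ≤ 18*(k:ℤ)^2+9*(k:ℤ)+1)
      zify
      rcases hr3 with hr | hr | hr
      · have hz' : (z:ℤ) + 3 ≤ 3*(k:ℤ) := by
          have h := (by omega : z + 3 ≤ 3*k); zify at h; linarith
        have hB' : (B:ℤ) ≤ 6*(k:ℤ) := by
          have h := (by omega : B ≤ 6*k); zify at h; linarith
        linarith [H1,
          mul_le_mul_of_nonneg_right (by linarith : (z:ℤ) ≤ 3*(k:ℤ)-3)
            (by positivity : (0:ℤ) ≤ 36*(k:ℤ)^2+24*(k:ℤ)+3),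
          mul_le_mul_of_nonneg_right (by linarith : (z:ℤ) + 3*(w:ℤ) ≤ 6*(k:ℤ))
            (by positivity : (0:ℤ) ≤ 18*(k:ℤ)^2+21*(k:ℤ)+6)]
      · have hz' : (z:ℤ) + 2 ≤ 3*(k:ℤ) := by
          have h := (by omega : z + 2 ≤ 3*k); zify at h; linarith
        have hB' : (B:ℤ) ≤ 6*(k:ℤ) - 2 := by
          have h := (by omega : B + 2 ≤ 6*k); zify at h; linarith
        linarith [H1,
          mul_le_mul_of_nonneg_right (by linarith : (z:ℤ) ≤ 3*(k:ℤ)-2)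
            (by positivity : (0:ℤ) ≤ 36*(k:ℤ)^2+24*(k:ℤ)+3),
          mul_le_mul_of_nonneg_right (by linarith : (z:ℤ) + 3*(w:ℤ) ≤ 6*(k:ℤ)-2)
            (by positivity : (0:ℤ) ≤ 18*(k:ℤ)^2+21*(k:ℤ)+6)]
      · have hz' : (z:ℤ) + 1 ≤ 3*(k:ℤ) := by
          have h := (by omega : z + 1 ≤ 3*k); zify at h; linarith
        have hB' : (B:ℤ) ≤ 6*(k:ℤ) - 1 := by
          have h := (by omega : B + 1 ≤ 6*k); zify at h; linarith
        linarith [H1,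
          mul_le_mul_of_nonneg_right (by linarith : (z:ℤ) ≤ 3*(k:ℤ)-1)
            (by positivity : (0:ℤ) ≤ 36*(k:ℤ)^2+24*(k:ℤ)+3),
          mul_le_mul_of_nonneg_right (by linarith : (z:ℤ) + 3*(w:ℤ) ≤ 6*(k:ℤ)-1)
            (by positivity : (0:ℤ) ≤ 18*(k:ℤ)^2+21*(k:ℤ)+6)]
    · have hwmod : w ≡ ws [MOD k] := by
        show (ws + k*t) % k = ws % k
        exact Nat.add_mul_mod_self_left ws k t
      have hws2 : ws ≡ B + q*(k-1) [MOD k] := Nat.mod_modEq _ _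
      have hid : q + (B + q*(k-1)) = B + q*k := by
        have h1 : q*(k-1) + q = q*k := by
          calc q*(k-1) + q = q*((k-1)+1) := by ring
            _ = q*k := by rw [(by omega : k - 1 + 1 = k)]
        omega
      have hqw : q + w ≡ B [MOD k] := by
        calc q + w ≡ q + (B + q*(k-1)) [MOD k] := (hwmod.trans hws2).add_left q
          _ = B + q*k := hid
          _ ≡ B [MOD k] := by
              have e : B + q*k = B + k*q := by ring
              rw [e]; exact Nat.add_mul_mod_self_left B k q
      have hmul : 3*(q + w) ≡ 3*B [MOD 3*k] := hqw.mul_left' 3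
      have hid2 : y + 3*z + 6*w + 3*(q + w) = n + 3*B := by omega
      have hstep : y + 3*z + 6*w + 3*(q + w) ≡ n + 3*(q + w) [MOD 3*k] := by
        rw [hid2]; exact (hmul.add_left n).symm
      exact Nat.ModEq.add_right_cancel' (3*(q+w)) hstep

private lemma mem_ge4 (k n : ℕ) (hk : 2 ≤ k) (hn : 72*k^3+66*k^2+15*k ≤ n) :
    ∃ x y z w : ℕ, n = x*(18*k^2+3*k) + y*(18*k^2+9*k+1) + z*(18*k^2+15*k+3)
      + w*(18*k^2+21*k+6) := by
  obtain ⟨y, z, w, hbound, hmod⟩ := cost_lemma4 k n hk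
  have hk2 : (2:ℤ) ≤ (k:ℤ) := by exact_mod_cast hk
  have hle : y*(18*k^2+9*k+1) + z*(18*k^2+15*k+3) + w*(18*k^2+21*k+6) ≤ n := by
    by_contra hlt
    push_neg at hlt
    have hd : 3*k*(6*k+1) ∣
        y*(18*k^2+9*k+1) + z*(18*k^2+15*k+3) + w*(18*k^2+21*k+6) - n :=
      (Nat.modEq_iff_dvd' hlt.le).mp hmod.symm
    obtain ⟨m, hm⟩ := hd
    have hm1 : 1 ≤ m := by
      rcases Nat.eq_zero_or_pos m with h0 | h1
      · rw [h0, mul_zero] at hm; omega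
      · exact h1
    have hcn : y*(18*k^2+9*k+1) + z*(18*k^2+15*k+3) + w*(18*k^2+21*k+6)
        = n + 3*k*(6*k+1)*m := by
      rw [← hm]; omega
    have hZ1 : (y:ℤ)*(18*(k:ℤ)^2+9*k+1) + (z:ℤ)*(18*(k:ℤ)^2+15*k+3)
        + (w:ℤ)*(18*(k:ℤ)^2+21*k+6) = (n:ℤ) + 3*(k:ℤ)*(6*(k:ℤ)+1)*(m:ℤ) := by
      exact_mod_cast hcn
    have hZ2 : (y:ℤ)*(18*(k:ℤ)^2+9*k+1) + (z:ℤ)*(18*(k:ℤ)^2+15*k+3)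
        + (w:ℤ)*(18*(k:ℤ)^2+21*k+6) + 1 ≤ 72*(k:ℤ)^3+84*(k:ℤ)^2+18*(k:ℤ) := by
      exact_mod_cast hbound
    have hZ3 : 72*(k:ℤ)^3+66*(k:ℤ)^2+15*(k:ℤ) ≤ (n:ℤ) := by exact_mod_cast hn
    have hm1' : (1:ℤ) ≤ (m:ℤ) := by exact_mod_cast hm1
    nlinarith [mul_le_mul_of_nonneg_left hm1'
      (show (0:ℤ) ≤ 3*(k:ℤ)*(6*(k:ℤ)+1) by positivity)]
  obtain ⟨x, hx⟩ := (Nat.modEq_iff_dvd' hle).mp hmod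
  refine ⟨x, y, z, w, ?_⟩
  have hfin := (Nat.sub_eq_iff_eq_add hle).mp hx
  rw [hfin]; ring

theorem frobenius_four_consecutive_triangular_6k (k : ℕ) (hk : 1 < k) :
    frobNum (AddSubmonoid.closure
        ({Nat.choose (6 * k + 1) 2, Nat.choose (6 * k + 2) 2,
          Nat.choose (6 * k + 3) 2, Nat.choose (6 * k + 4) 2} : Set ℕ)) =
      72 * k ^ 3 + 66 * k ^ 2 + 15 * k - 1 := by
  have hk2 : 2 ≤ k := hk
  have g1 : Nat.choose (6*k+1) 2 = 18*k^2+3*k := by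
    rw [Nat.choose_two_right, (by omega : 6*k+1-1 = 6*k),
      (by ring : (6*k+1)*(6*k) = 2*(18*k^2+3*k))]
    exact Nat.mul_div_cancel_left _ (by norm_num)
  have g2 : Nat.choose (6*k+2) 2 = 18*k^2+9*k+1 := by
    rw [Nat.choose_two_right, (by omega : 6*k+2-1 = 6*k+1),
      (by ring : (6*k+2)*(6*k+1) = 2*(18*k^2+9*k+1))]
    exact Nat.mul_div_cancel_left _ (by norm_num)
  have g3 : Nat.choose (6*k+3) 2 = 18*k^2+15*k+3 := by
    rw [Nat.choose_two_right, (by omega : 6*k+3-1 = 6*k+2),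
      (by ring : (6*k+3)*(6*k+2) = 2*(18*k^2+15*k+3))]
    exact Nat.mul_div_cancel_left _ (by norm_num)
  have g4 : Nat.choose (6*k+4) 2 = 18*k^2+21*k+6 := by
    rw [Nat.choose_two_right, (by omega : 6*k+4-1 = 6*k+3),
      (by ring : (6*k+4)*(6*k+3) = 2*(18*k^2+21*k+6))]
    exact Nat.mul_div_cancel_left _ (by norm_num)
  rw [g1, g2, g3, g4]
  have hF1 : 72*k^3+66*k^2+15*k - 1 + 1 = 72*k^3+66*k^2+15*k :=
    Nat.sub_add_cancel (le_trans (by omega : 1 ≤ 15*k) (Nat.le_add_left _ _))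
  unfold frobNum
  apply IsGreatest.csSup_eq
  constructor
  · show (72*k^3+66*k^2+15*k-1) ∉ AddSubmonoid.closure _
    intro hmem
    rw [mem_closure4] at hmem
    obtain ⟨x, y, z, w, h⟩ := hmem
    refine nonmem4 k x y z w hk2 ?_
    rw [← hF1, h]
  · intro m hm
    by_contra hgt
    push_neg at hgt
    refine hm ?_
    rw [mem_closure4]
    refine mem_ge4 k m hk2 ?_
    have h2 := Nat.succ_le_of_lt hgt
    rw [← hF1]; exact h2
end

section
/- For every integer k > 1, the Frobenius number of the numerical semigroup ⟨(12k)², (12k+1)², (12k+2)², (12k+3)²⟩ equals 1584k³ + 576k² + 54k − 2. -/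
set_option maxHeartbeats 1000000


lemma mem_closure4_s11 (a b c d x y z w : ℕ) :
    x*a + y*b + z*c + w*d ∈ AddSubmonoid.closure ({a, b, c, d} : Set ℕ) := by
  have ha : a ∈ AddSubmonoid.closure ({a,b,c,d} : Set ℕ) :=
    AddSubmonoid.subset_closure (by simp)
  have hb : b ∈ AddSubmonoid.closure ({a,b,c,d} : Set ℕ) :=
    AddSubmonoid.subset_closure (by simp)
  have hc : c ∈ AddSubmonoid.closure ({a,b,c,d} : Set ℕ) :=
    AddSubmonoid.subset_closure (by simp)
  have hd : d ∈ AddSubmonoid.closure ({a,b,c,d} : Set ℕ) :=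
    AddSubmonoid.subset_closure (by simp)
  exact AddSubmonoid.add_mem _ (AddSubmonoid.add_mem _ (AddSubmonoid.add_mem _
    (AddSubmonoid.nsmul_mem _ ha x) (AddSubmonoid.nsmul_mem _ hb y))
    (AddSubmonoid.nsmul_mem _ hc z)) (AddSubmonoid.nsmul_mem _ hd w)

lemma mem_closure4_iff (a b c d m : ℕ) :
    m ∈ AddSubmonoid.closure ({a, b, c, d} : Set ℕ) ↔
      ∃ x y z w, m = x*a + y*b + z*c + w*d := by
  constructor
  · intro hm
    induction hm using AddSubmonoid.closure_induction with
    | mem g hg =>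
      rcases hg with h | h | h | h
      · exact ⟨1, 0, 0, 0, by omega⟩
      · exact ⟨0, 1, 0, 0, by omega⟩
      · exact ⟨0, 0, 1, 0, by omega⟩
      · exact ⟨0, 0, 0, 1, by simp at h; omega⟩
    | zero => exact ⟨0,0,0,0, by simp⟩
    | add g₁ g₂ h₁ h₂ ih₁ ih₂ =>
      obtain ⟨x1,y1,z1,w1,e1⟩ := ih₁
      obtain ⟨x2,y2,z2,w2,e2⟩ := ih₂
      exact ⟨x1+x2, y1+y2, z1+z2, w1+w2, by subst e1 e2; ring⟩
  · rintro ⟨x,y,z,w,rfl⟩; exact mem_closure4_s11 a b c d x y z w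


lemma build (k t u v r y z w : ℕ)
    (hid : u*(24*k+1) + 2*v = t*(144*k^2) + r)
    (h1 : y + 2*z + 3*w = u) (h2 : z + 3*w = v) :
    y*(24*k+1) + z*(48*k+4) + w*(72*k+9) = t*(144*k^2) + r := by
  rw [← hid, ← h1, ← h2]; ring

lemma famZ (k t u v r B : ℕ)
    (hz : 3*((2*v+2-u)/3) ≤ v)
    (hcost : t + u + (2*v+2-u)/3 ≤ B + v)
    (hid : ((u:ℤ)*(24*(k:ℤ)+1) + 2*(v:ℤ) : ℤ) = (t:ℤ)*(144*(k:ℤ)^2) + (r:ℤ)) :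
    ∃ t' y z w, y*(24*k+1) + z*(48*k+4) + w*(72*k+9) = t'*(144*k^2) + r
      ∧ t' + y + z + w ≤ B := by
  have hidN : u*(24*k+1) + 2*v = t*(144*k^2) + r := by exact_mod_cast hid
  refine ⟨t, u + 3*((2*v+2-u)/3) - 2*v, v - 3*((2*v+2-u)/3), (2*v+2-u)/3,
    build k t u v r _ _ _ hidN (by omega) (by omega), by omega⟩
theorem cover (k r : ℕ) (hk : 2 ≤ k) (hlt : r < 144*k^2) (hne : r + 2 ≠ 54*k) :
    ∃ t y z w, y*(24*k+1) + z*(48*k+4) + w*(72*k+9) = t*(144*k^2) + r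
      ∧ t + y + z + w ≤ 11*k + 4 := by
  obtain ⟨q, d, hr, hdlt⟩ : ∃ q d, r = q*(48*k+6) + d ∧ d < 48*k+6 :=
    ⟨r / (48*k+6), r % (48*k+6), by rw [Nat.mul_comm]; exact (Nat.div_add_mod r (48*k+6)).symm,
      Nat.mod_lt _ (by omega)⟩
  have hq : q + 1 ≤ 3*k := by
    by_contra hcon
    have h3 : 3*k ≤ q := by omega
    have := Nat.mul_le_mul_right (48*k+6) h3
    nlinarith
  have hrz : (r:ℤ) = (q:ℤ)*(48*(k:ℤ)+6) + (d:ℤ) := by exact_mod_cast hr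
  rcases Nat.even_or_odd d with ⟨i, hd0⟩ | ⟨i, hd⟩
  · -- even d = 2*i
    have hd : d = 2*i := by omega
    have hdz : (d:ℤ) = 2*(i:ℤ) := by exact_mod_cast hd
    by_cases h1 : 6*k ≤ d + 4*q ∧ d + 6 ≤ 14*k
    · -- E1
      obtain ⟨u, hu⟩ : ∃ u, u + 0 = 2*q + 6*k := ⟨2*q + 6*k - 0, by omega⟩
      obtain ⟨v, hv⟩ : ∃ v, v + 3*k = i + 2*q + 0 := ⟨i + 2*q + 0 - 3*k, by omega⟩
      refine famZ k 1 u v r (11*k+4) (by omega) (by omega) ?_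
      have huz : (u:ℤ) + 0 = 2*(q:ℤ) + 6*(k:ℤ) := by exact_mod_cast hu
      have hvz : (v:ℤ) + 3*k = (i:ℤ) + 2*(q:ℤ) + 0 := by exact_mod_cast hv
      push_cast
      linear_combination (24*(k:ℤ)+1)*huz + 2*hvz - hdz - hrz
    by_cases h2 : 14*k ≤ d + 4 ∧ d + 4 ≤ 36*k
    · -- E2
      obtain ⟨u, hu⟩ : ∃ u, u + 0 = 2*q + 12*k := ⟨2*q + 12*k - 0, by omega⟩
      obtain ⟨v, hv⟩ : ∃ v, v + 6*k = i + 2*q + 0 := ⟨i + 2*q + 0 - 6*k, by omega⟩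
      refine famZ k 2 u v r (11*k+4) (by omega) (by omega) ?_
      have huz : (u:ℤ) + 0 = 2*(q:ℤ) + 12*(k:ℤ) := by exact_mod_cast hu
      have hvz : (v:ℤ) + 6*k = (i:ℤ) + 2*(q:ℤ) + 0 := by exact_mod_cast hv
      push_cast
      linear_combination (24*(k:ℤ)+1)*huz + 2*hvz - hdz - hrz
    by_cases h3 : 36*k ≤ d + 2
    · -- E3
      obtain ⟨u, hu⟩ : ∃ u, u + 0 = 2*q + 18*k := ⟨2*q + 18*k - 0, by omega⟩
      obtain ⟨v, hv⟩ : ∃ v, v + 9*k = i + 2*q + 0 := ⟨i + 2*q + 0 - 9*k, by omega⟩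
      refine famZ k 3 u v r (11*k+4) (by omega) (by omega) ?_
      have huz : (u:ℤ) + 0 = 2*(q:ℤ) + 18*(k:ℤ) := by exact_mod_cast hu
      have hvz : (v:ℤ) + 9*k = (i:ℤ) + 2*(q:ℤ) + 0 := by exact_mod_cast hv
      push_cast
      linear_combination (24*(k:ℤ)+1)*huz + 2*hvz - hdz - hrz
    by_cases h4 : d + 10 ≤ 6*k
    · -- E4
      obtain ⟨u, hu⟩ : ∃ u, u + 2 = 2*q + 18*k := ⟨2*q + 18*k - 2, by omega⟩
      obtain ⟨v, hv⟩ : ∃ v, v + 0 = i + 2*q + 15*k+1 := ⟨i + 2*q + 15*k+1 - 0, by omega⟩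
      refine famZ k 3 u v r (11*k+4) (by omega) (by omega) ?_
      have huz : (u:ℤ) + 2 = 2*(q:ℤ) + 18*(k:ℤ) := by exact_mod_cast hu
      have hvz : (v:ℤ) + 0 = (i:ℤ) + 2*(q:ℤ) + 15*(k:ℤ)+1 := by exact_mod_cast hv
      push_cast
      linear_combination (24*(k:ℤ)+1)*huz + 2*hvz - hdz - hrz
    by_cases hq0 : q = 0
    · subst hq0
      by_cases c1 : d + 8 = 6*k
      · -- A1
        have hrk : r + 8 = 6*k := by omega
        obtain ⟨u, hu⟩ : ∃ u, u + 2 = 18*k := ⟨18*k - 2, by omega⟩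
        obtain ⟨v, hv⟩ : ∃ v, v + 3 = 18*k := ⟨18*k - 3, by omega⟩
        refine famZ k 3 u v r (11*k+4) (by omega) (by omega) ?_
        have huz : (u:ℤ) + 2 = 18*(k:ℤ) := by exact_mod_cast hu
        have hvz : (v:ℤ) + 3 = 18*(k:ℤ) := by exact_mod_cast hv
        have hrkz : (r:ℤ) + 8 = 6*(k:ℤ) := by exact_mod_cast hrk
        push_cast
        linear_combination (24*(k:ℤ)+1)*huz + 2*hvz - hrkz
      by_cases c2 : d + 6 = 6*k
      · -- A2
        have hrk : r + 6 = 6*k := by omega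
        obtain ⟨u, hu⟩ : ∃ u, u + 2 = 24*k := ⟨24*k - 2, by omega⟩
        obtain ⟨v, hv⟩ : ∃ v, v + 2 = 15*k := ⟨15*k - 2, by omega⟩
        refine famZ k 4 u v r (11*k+4) (by omega) (by omega) ?_
        have huz : (u:ℤ) + 2 = 24*(k:ℤ) := by exact_mod_cast hu
        have hvz : (v:ℤ) + 2 = 15*(k:ℤ) := by exact_mod_cast hv
        have hrkz : (r:ℤ) + 6 = 6*(k:ℤ) := by exact_mod_cast hrk
        push_cast
        linear_combination (24*(k:ℤ)+1)*huz + 2*hvz - hrkz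
      by_cases c3 : d + 4 = 6*k
      · -- A4
        have hrk : r + 4 = 6*k := by omega
        obtain ⟨u, hu⟩ : ∃ u, u + 2 = 24*k := ⟨24*k - 2, by omega⟩
        obtain ⟨v, hv⟩ : ∃ v, v + 1 = 15*k := ⟨15*k - 1, by omega⟩
        refine famZ k 4 u v r (11*k+4) (by omega) (by omega) ?_
        have huz : (u:ℤ) + 2 = 24*(k:ℤ) := by exact_mod_cast hu
        have hvz : (v:ℤ) + 1 = 15*(k:ℤ) := by exact_mod_cast hv
        have hrkz : (r:ℤ) + 4 = 6*(k:ℤ) := by exact_mod_cast hrk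
        push_cast
        linear_combination (24*(k:ℤ)+1)*huz + 2*hvz - hrkz
      by_cases c4 : d + 2 = 6*k
      · -- A5
        have hrk : r + 2 = 6*k := by omega
        obtain ⟨u, hu⟩ : ∃ u, u + 2 = 24*k := ⟨24*k - 2, by omega⟩
        obtain ⟨v, hv⟩ : ∃ v, v + 0 = 15*k := ⟨15*k - 0, by omega⟩
        refine famZ k 4 u v r (11*k+4) (by omega) (by omega) ?_
        have huz : (u:ℤ) + 2 = 24*(k:ℤ) := by exact_mod_cast hu
        have hvz : (v:ℤ) + 0 = 15*(k:ℤ) := by exact_mod_cast hv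
        have hrkz : (r:ℤ) + 2 = 6*(k:ℤ) := by exact_mod_cast hrk
        push_cast
        linear_combination (24*(k:ℤ)+1)*huz + 2*hvz - hrkz
      omega
    · have hq1 : q = 1 := by omega
      subst hq1
      by_cases c1 : d + 8 = 6*k
      · exact absurd (by omega : r + 2 = 54*k) hne
      by_cases c2 : d + 6 = 6*k
      · -- A3 : r = 54k
        have hrk : r = 54*k := by omega
        obtain ⟨u, hu⟩ : ∃ u, u + 0 = 18*k := ⟨18*k - 0, by omega⟩
        obtain ⟨v, hv⟩ : ∃ v, v + 0 = 18*k := ⟨18*k - 0, by omega⟩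
        refine famZ k 3 u v r (11*k+4) (by omega) (by omega) ?_
        have huz : (u:ℤ) + 0 = 18*(k:ℤ) := by exact_mod_cast hu
        have hvz : (v:ℤ) + 0 = 18*(k:ℤ) := by exact_mod_cast hv
        have hrkz : (r:ℤ) = 54*(k:ℤ) := by exact_mod_cast hrk
        push_cast
        linear_combination (24*(k:ℤ)+1)*huz + 2*hvz - hrkz
      omega
  · -- odd d = 2*i+1
    have hdz : (d:ℤ) = 2*(i:ℤ)+1 := by exact_mod_cast hd
    by_cases h1 : d + 7 ≤ 12*k
    · -- O1
      obtain ⟨u, hu⟩ : ∃ u, u + 1 = 2*q + 12*k := ⟨2*q + 12*k - 1, by omega⟩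
      obtain ⟨v, hv⟩ : ∃ v, v + 0 = i + 2*q + 6*k+1 := ⟨i + 2*q + 6*k+1 - 0, by omega⟩
      refine famZ k 2 u v r (11*k+4) (by omega) (by omega) ?_
      have huz : (u:ℤ) + 1 = 2*(q:ℤ) + 12*(k:ℤ) := by exact_mod_cast hu
      have hvz : (v:ℤ) + 0 = (i:ℤ) + 2*(q:ℤ) + 6*(k:ℤ)+1 := by exact_mod_cast hv
      push_cast
      linear_combination (24*(k:ℤ)+1)*huz + 2*hvz - hdz - hrz
    by_cases h2 : d + 7 ≤ 30*k
    · -- O2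
      obtain ⟨u, hu⟩ : ∃ u, u + 1 = 2*q + 18*k := ⟨2*q + 18*k - 1, by omega⟩
      obtain ⟨v, hv⟩ : ∃ v, v + 0 = i + 2*q + 3*k+1 := ⟨i + 2*q + 3*k+1 - 0, by omega⟩
      refine famZ k 3 u v r (11*k+4) (by omega) (by omega) ?_
      have huz : (u:ℤ) + 1 = 2*(q:ℤ) + 18*(k:ℤ) := by exact_mod_cast hu
      have hvz : (v:ℤ) + 0 = (i:ℤ) + 2*(q:ℤ) + 3*(k:ℤ)+1 := by exact_mod_cast hv
      push_cast
      linear_combination (24*(k:ℤ)+1)*huz + 2*hvz - hdz - hrz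
    by_cases h3 : 38*k ≤ d + 1
    · -- O5
      obtain ⟨u, hu⟩ : ∃ u, u + 0 = 2*q + 12*k+1 := ⟨2*q + 12*k+1 - 0, by omega⟩
      obtain ⟨v, hv⟩ : ∃ v, v + 18*k = i + 2*q + 0 := ⟨i + 2*q + 0 - 18*k, by omega⟩
      refine famZ k 2 u v r (11*k+4) (by omega) (by omega) ?_
      have huz : (u:ℤ) + 0 = 2*(q:ℤ) + 12*(k:ℤ)+1 := by exact_mod_cast hu
      have hvz : (v:ℤ) + 18*k = (i:ℤ) + 2*(q:ℤ) + 0 := by exact_mod_cast hv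
      push_cast
      linear_combination (24*(k:ℤ)+1)*huz + 2*hvz - hdz - hrz
    by_cases h4 : 30*k+1 ≤ d + 4*q
    · -- O4
      obtain ⟨u, hu⟩ : ∃ u, u + 0 = 2*q + 6*k+1 := ⟨2*q + 6*k+1 - 0, by omega⟩
      obtain ⟨v, hv⟩ : ∃ v, v + 15*k = i + 2*q + 0 := ⟨i + 2*q + 0 - 15*k, by omega⟩
      refine famZ k 1 u v r (11*k+4) (by omega) (by omega) ?_
      have huz : (u:ℤ) + 0 = 2*(q:ℤ) + 6*(k:ℤ)+1 := by exact_mod_cast hu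
      have hvz : (v:ℤ) + 15*k = (i:ℤ) + 2*(q:ℤ) + 0 := by exact_mod_cast hv
      push_cast
      linear_combination (24*(k:ℤ)+1)*huz + 2*hvz - hdz - hrz
    by_cases hq0 : q = 0
    · subst hq0
      by_cases c1 : d + 5 = 30*k
      · -- B1
        have hrk : r + 5 = 30*k := by omega
        obtain ⟨u, hu⟩ : ∃ u, u + 1 = 18*k := ⟨18*k - 1, by omega⟩
        obtain ⟨v, hv⟩ : ∃ v, v + 2 = 18*k := ⟨18*k - 2, by omega⟩
        refine famZ k 3 u v r (11*k+4) (by omega) (by omega) ?_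
        have huz : (u:ℤ) + 1 = 18*(k:ℤ) := by exact_mod_cast hu
        have hvz : (v:ℤ) + 2 = 18*(k:ℤ) := by exact_mod_cast hv
        have hrkz : (r:ℤ) + 5 = 30*(k:ℤ) := by exact_mod_cast hrk
        push_cast
        linear_combination (24*(k:ℤ)+1)*huz + 2*hvz - hrkz
      by_cases c2 : d + 3 = 30*k
      · -- B3
        have hrk : r + 3 = 30*k := by omega
        obtain ⟨u, hu⟩ : ∃ u, u + 1 = 24*k := ⟨24*k - 1, by omega⟩
        obtain ⟨v, hv⟩ : ∃ v, v + 1 = 15*k := ⟨15*k - 1, by omega⟩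
        refine famZ k 4 u v r (11*k+4) (by omega) (by omega) ?_
        have huz : (u:ℤ) + 1 = 24*(k:ℤ) := by exact_mod_cast hu
        have hvz : (v:ℤ) + 1 = 15*(k:ℤ) := by exact_mod_cast hv
        have hrkz : (r:ℤ) + 3 = 30*(k:ℤ) := by exact_mod_cast hrk
        push_cast
        linear_combination (24*(k:ℤ)+1)*huz + 2*hvz - hrkz
      by_cases c3 : d + 1 = 30*k
      · -- B4
        have hrk : r + 1 = 30*k := by omega
        obtain ⟨u, hu⟩ : ∃ u, u + 1 = 24*k := ⟨24*k - 1, by omega⟩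
        obtain ⟨v, hv⟩ : ∃ v, v + 0 = 15*k := ⟨15*k - 0, by omega⟩
        refine famZ k 4 u v r (11*k+4) (by omega) (by omega) ?_
        have huz : (u:ℤ) + 1 = 24*(k:ℤ) := by exact_mod_cast hu
        have hvz : (v:ℤ) + 0 = 15*(k:ℤ) := by exact_mod_cast hv
        have hrkz : (r:ℤ) + 1 = 30*(k:ℤ) := by exact_mod_cast hrk
        push_cast
        linear_combination (24*(k:ℤ)+1)*huz + 2*hvz - hrkz
      omega
    · have hq1 : q = 1 := by omega
      subst hq1
      by_cases c1 : d + 5 = 30*k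
      · -- B2 : r = 78k+1
        have hrk : r = 78*k+1 := by omega
        obtain ⟨u, hu⟩ : ∃ u, u + 0 = 18*k+1 := ⟨18*k+1 - 0, by omega⟩
        obtain ⟨v, hv⟩ : ∃ v, v + 0 = 18*k := ⟨18*k - 0, by omega⟩
        refine famZ k 3 u v r (11*k+4) (by omega) (by omega) ?_
        have huz : (u:ℤ) + 0 = 18*(k:ℤ)+1 := by exact_mod_cast hu
        have hvz : (v:ℤ) + 0 = 18*(k:ℤ) := by exact_mod_cast hv
        have hrkz : (r:ℤ) = 78*(k:ℤ)+1 := by exact_mod_cast hrk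
        push_cast
        linear_combination (24*(k:ℤ)+1)*huz + 2*hvz - hrkz
      omega


lemma winUB (K U B S : ℤ) (hpos : (0:ℤ) < 24*K+1)
    (h : U*(24*K+1) ≤ S) (hS : S < (B+1)*(24*K+1)) : U ≤ B := by
  by_contra hc
  push_neg at hc
  have h2 : (B+1)*(24*K+1) ≤ U*(24*K+1) :=
    mul_le_mul_of_nonneg_right (by linarith) (by linarith)
  linarith

lemma winLB (K U B S : ℤ) (hpos : (0:ℤ) < 24*K+3)
    (h : S ≤ U*(24*K+3)) (hS : (B-1)*(24*K+3) < S) : B ≤ U := by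
  by_contra hc
  push_neg at hc
  have h2 : U*(24*K+3) ≤ (B-1)*(24*K+3) :=
    mul_le_mul_of_nonneg_right (by linarith) (by linarith)
  linarith

theorem coverR0 (k r : ℕ) (hk : 2 ≤ k) (hr : r + 2 = 54*k) :
    ∃ t y z w, y*(24*k+1) + z*(48*k+4) + w*(72*k+9) = t*(144*k^2) + r
      ∧ t + y + z + w = 11*k + 5 := by
  obtain ⟨z, hz⟩ : ∃ z, z + 1 = 9*k := ⟨9*k - 1, by omega⟩
  refine ⟨4, 2, z, 2*k, ?_, by omega⟩
  have hzz : (z:ℤ) + 1 = 9*(k:ℤ) := by exact_mod_cast hz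
  have hrr : (r:ℤ) + 2 = 54*(k:ℤ) := by exact_mod_cast hr
  have : (2*(24*(k:ℤ)+1) + (z:ℤ)*(48*(k:ℤ)+4) + (2*(k:ℤ))*(72*(k:ℤ)+9) : ℤ)
      = 4*(144*(k:ℤ)^2) + (r:ℤ) := by linear_combination (48*(k:ℤ)+4)*hzz - hrr
  exact_mod_cast this

theorem lower (k t y z w r : ℕ) (hk : 2 ≤ k) (hr : r + 2 = 54*k)
    (heq : y*(24*k+1) + z*(48*k+4) + w*(72*k+9) = t*(144*k^2) + r) :
    11*k + 5 ≤ t + y + z + w := by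
  by_contra hc
  have hcost : t + y + z + w ≤ 11*k + 4 := by omega
  obtain ⟨u, hu⟩ : ∃ u, u = y + 2*z + 3*w := ⟨_, rfl⟩
  obtain ⟨v, hv⟩ : ∃ v, v = z + 3*w := ⟨_, rfl⟩
  have hs : u*(24*k+1) + 2*v = t*(144*k^2) + r := by
    rw [← heq, hu, hv]; ring
  have hsZ : (u:ℤ)*(24*(k:ℤ)+1) + 2*(v:ℤ) = (t:ℤ)*(144*(k:ℤ)^2) + (r:ℤ) := by
    exact_mod_cast hs
  have hrZ : (r:ℤ) + 2 = 54*(k:ℤ) := by exact_mod_cast hr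
  have hkZ : (2:ℤ) ≤ (k:ℤ) := by exact_mod_cast hk
  have hvu : v ≤ u := by omega
  have hvuZ : (v:ℤ) ≤ (u:ℤ) := by exact_mod_cast hvu
  have hvZ : (0:ℤ) ≤ (v:ℤ) := Int.natCast_nonneg v
  have huZ : (0:ℤ) ≤ (u:ℤ) := Int.natCast_nonneg u
  have hA : (u:ℤ)*(24*(k:ℤ)+1) ≤ (t:ℤ)*(144*(k:ℤ)^2) + (r:ℤ) := by linarith
  have hB : (t:ℤ)*(144*(k:ℤ)^2) + (r:ℤ) ≤ (u:ℤ)*(24*(k:ℤ)+3) := by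
    have hring : (u:ℤ)*(24*(k:ℤ)+3) = (u:ℤ)*(24*(k:ℤ)+1) + 2*(u:ℤ) := by ring
    linarith
  have ht : t ≤ 5 := by
    by_contra ht6
    have h6 : 6 ≤ t := by omega
    have hub : u + 3*t ≤ 33*k + 12 := by omega
    have hubZ : (u:ℤ) + 3*(t:ℤ) ≤ 33*(k:ℤ) + 12 := by exact_mod_cast hub
    have h6Z : (6:ℤ) ≤ (t:ℤ) := by exact_mod_cast h6
    nlinarith [mul_le_mul_of_nonneg_right hubZ (by linarith : (0:ℤ) ≤ 24*(k:ℤ)+3),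
      mul_le_mul_of_nonneg_right h6Z (by positivity : (0:ℤ) ≤ 144*(k:ℤ)^2), hB]
  clear hc heq hs
  interval_cases t
  · -- t = 0
    have hA' : (u:ℤ)*(24*(k:ℤ)+1) ≤ 0*(144*(k:ℤ)^2) + (r:ℤ) := by push_cast at hA; linarith
    have hB' : (0*(144*(k:ℤ)^2) + (r:ℤ) : ℤ) ≤ (u:ℤ)*(24*(k:ℤ)+3) := by push_cast at hB; linarith
    have hsZ' : (u:ℤ)*(24*(k:ℤ)+1) + 2*(v:ℤ) = 0*(144*(k:ℤ)^2) + (r:ℤ) := by push_cast at hsZ; linarith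
    have hubZ : (u:ℤ) ≤ 2 := winUB (k:ℤ) (u:ℤ) _ _ (by linarith) hA' (by linarith [hrZ, hkZ])
    have hub : u ≤ 2 := by exact_mod_cast hubZ
    rcases (by omega : u = 0 ∨ u = 1 ∨ u = 2) with huv | huv | huv
    · have huvZ : (u:ℤ) = 0 := by exact_mod_cast huv
      have h2vZ : 2*(v:ℤ) + 2 = 54*(k:ℤ) := by
        linear_combination hsZ' - (24*(k:ℤ)+1)*huvZ + hrZ
      have h2v : 2*v + 2 = 54*k := by exact_mod_cast h2vZ
      omega
    · have huvZ : (u:ℤ) = 1 := by exact_mod_cast huv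
      have h2vZ : 2*(v:ℤ) + 3 = 30*(k:ℤ) := by
        linear_combination hsZ' - (24*(k:ℤ)+1)*huvZ + hrZ
      have h2v : 2*v + 3 = 30*k := by exact_mod_cast h2vZ
      omega
    · have huvZ : (u:ℤ) = 2 := by exact_mod_cast huv
      have h2vZ : 2*(v:ℤ) + 4 = 6*(k:ℤ) := by
        linear_combination hsZ' - (24*(k:ℤ)+1)*huvZ + hrZ
      have h2v : 2*v + 4 = 6*k := by exact_mod_cast h2vZ
      omega
  · -- t = 1
    have hA' : (u:ℤ)*(24*(k:ℤ)+1) ≤ 1*(144*(k:ℤ)^2) + (r:ℤ) := by push_cast at hA; linarith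
    have hB' : (1*(144*(k:ℤ)^2) + (r:ℤ) : ℤ) ≤ (u:ℤ)*(24*(k:ℤ)+3) := by push_cast at hB; linarith
    have hsZ' : (u:ℤ)*(24*(k:ℤ)+1) + 2*(v:ℤ) = 1*(144*(k:ℤ)^2) + (r:ℤ) := by push_cast at hsZ; linarith
    have hubZ : (u:ℤ) ≤ 6*(k:ℤ)+1 := winUB (k:ℤ) (u:ℤ) _ _ (by linarith) hA' (by linarith [hrZ, hkZ])
    have hub : u ≤ 6*k+1 := by exact_mod_cast hubZ
    have hlbZ : (6*(k:ℤ)+2 : ℤ) ≤ (u:ℤ) := winLB (k:ℤ) (u:ℤ) _ _ (by linarith) hB' (by linarith [hrZ, hkZ])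
    have hlb : 6*k+2 ≤ u := by exact_mod_cast hlbZ
    omega
  · -- t = 2
    have hA' : (u:ℤ)*(24*(k:ℤ)+1) ≤ 2*(144*(k:ℤ)^2) + (r:ℤ) := by push_cast at hA; linarith
    have hB' : (2*(144*(k:ℤ)^2) + (r:ℤ) : ℤ) ≤ (u:ℤ)*(24*(k:ℤ)+3) := by push_cast at hB; linarith
    have hsZ' : (u:ℤ)*(24*(k:ℤ)+1) + 2*(v:ℤ) = 2*(144*(k:ℤ)^2) + (r:ℤ) := by push_cast at hsZ; linarith
    have hubZ : (u:ℤ) ≤ 12*(k:ℤ)+1 := winUB (k:ℤ) (u:ℤ) _ _ (by linarith) hA' (by linarith [hrZ, hkZ])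
    have hub : u ≤ 12*k+1 := by exact_mod_cast hubZ
    have hlbZ : (12*(k:ℤ)+1 : ℤ) ≤ (u:ℤ) := winLB (k:ℤ) (u:ℤ) _ _ (by linarith) hB' (by linarith [hrZ, hkZ])
    have hlb : 12*k+1 ≤ u := by exact_mod_cast hlbZ
    have huv : u = 12*k+1 := by omega
    have huvZ : (u:ℤ) = 12*(k:ℤ)+1 := by rw [huv]; push_cast; ring
    have h2vZ : 2*(v:ℤ) + 3 = 18*(k:ℤ) := by
      linear_combination hsZ' - (24*(k:ℤ)+1)*huvZ + hrZ
    have h2v : 2*v + 3 = 18*k := by exact_mod_cast h2vZ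
    omega
  · -- t = 3
    have hA' : (u:ℤ)*(24*(k:ℤ)+1) ≤ 3*(144*(k:ℤ)^2) + (r:ℤ) := by push_cast at hA; linarith
    have hB' : (3*(144*(k:ℤ)^2) + (r:ℤ) : ℤ) ≤ (u:ℤ)*(24*(k:ℤ)+3) := by push_cast at hB; linarith
    have hsZ' : (u:ℤ)*(24*(k:ℤ)+1) + 2*(v:ℤ) = 3*(144*(k:ℤ)^2) + (r:ℤ) := by push_cast at hsZ; linarith
    have hubZ : (u:ℤ) ≤ 18*(k:ℤ)+1 := winUB (k:ℤ) (u:ℤ) _ _ (by linarith) hA' (by linarith [hrZ, hkZ])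
    have hub : u ≤ 18*k+1 := by exact_mod_cast hubZ
    have hlbZ : (18*(k:ℤ) : ℤ) ≤ (u:ℤ) := winLB (k:ℤ) (u:ℤ) _ _ (by linarith) hB' (by linarith [hrZ, hkZ])
    have hlb : 18*k ≤ u := by exact_mod_cast hlbZ
    rcases (by omega : u = 18*k ∨ u = 18*k+1) with huv | huv
    · have huvZ : (u:ℤ) = 18*(k:ℤ) := by rw [huv]; push_cast; ring
      have h2vZ : 2*(v:ℤ) + 2 = 36*(k:ℤ) := by
        linear_combination hsZ' - (24*(k:ℤ)+1)*huvZ + hrZ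
      have h2v : 2*v + 2 = 36*k := by exact_mod_cast h2vZ
      omega
    · have huvZ : (u:ℤ) = 18*(k:ℤ)+1 := by rw [huv]; push_cast; ring
      have h2vZ : 2*(v:ℤ) + 3 = 12*(k:ℤ) := by
        linear_combination hsZ' - (24*(k:ℤ)+1)*huvZ + hrZ
      have h2v : 2*v + 3 = 12*k := by exact_mod_cast h2vZ
      omega
  · -- t = 4
    have hA' : (u:ℤ)*(24*(k:ℤ)+1) ≤ 4*(144*(k:ℤ)^2) + (r:ℤ) := by push_cast at hA; linarith
    have hB' : (4*(144*(k:ℤ)^2) + (r:ℤ) : ℤ) ≤ (u:ℤ)*(24*(k:ℤ)+3) := by push_cast at hB; linarith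
    have hsZ' : (u:ℤ)*(24*(k:ℤ)+1) + 2*(v:ℤ) = 4*(144*(k:ℤ)^2) + (r:ℤ) := by push_cast at hsZ; linarith
    have hubZ : (u:ℤ) ≤ 24*(k:ℤ)+1 := winUB (k:ℤ) (u:ℤ) _ _ (by linarith) hA' (by linarith [hrZ, hkZ])
    have hub : u ≤ 24*k+1 := by exact_mod_cast hubZ
    have hlbZ : (24*(k:ℤ) : ℤ) ≤ (u:ℤ) := winLB (k:ℤ) (u:ℤ) _ _ (by linarith) hB' (by linarith [hrZ, hkZ])
    have hlb : 24*k ≤ u := by exact_mod_cast hlbZ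
    rcases (by omega : u = 24*k ∨ u = 24*k+1) with huv | huv
    · have huvZ : (u:ℤ) = 24*(k:ℤ) := by rw [huv]; push_cast; ring
      have h2vZ : 2*(v:ℤ) + 2 = 30*(k:ℤ) := by
        linear_combination hsZ' - (24*(k:ℤ)+1)*huvZ + hrZ
      have h2v : 2*v + 2 = 30*k := by exact_mod_cast h2vZ
      omega
    · have huvZ : (u:ℤ) = 24*(k:ℤ)+1 := by rw [huv]; push_cast; ring
      have h2vZ : 2*(v:ℤ) + 3 = 6*(k:ℤ) := by
        linear_combination hsZ' - (24*(k:ℤ)+1)*huvZ + hrZ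
      have h2v : 2*v + 3 = 6*k := by exact_mod_cast h2vZ
      omega
  · -- t = 5
    have hA' : (u:ℤ)*(24*(k:ℤ)+1) ≤ 5*(144*(k:ℤ)^2) + (r:ℤ) := by push_cast at hA; linarith
    have hB' : (5*(144*(k:ℤ)^2) + (r:ℤ) : ℤ) ≤ (u:ℤ)*(24*(k:ℤ)+3) := by push_cast at hB; linarith
    have hsZ' : (u:ℤ)*(24*(k:ℤ)+1) + 2*(v:ℤ) = 5*(144*(k:ℤ)^2) + (r:ℤ) := by push_cast at hsZ; linarith
    have hubZ : (u:ℤ) ≤ 30*(k:ℤ) := winUB (k:ℤ) (u:ℤ) _ _ (by linarith) hA' (by linarith [hrZ, hkZ])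
    have hub : u ≤ 30*k := by exact_mod_cast hubZ
    have hlbZ : (30*(k:ℤ)-1 : ℤ) ≤ (u:ℤ) := winLB (k:ℤ) (u:ℤ) _ _ (by linarith) hB' (by linarith [hrZ, hkZ])
    have hlb : 30*k ≤ u + 1 := by
      have : (30*(k:ℤ)) ≤ (u:ℤ) + 1 := by linarith
      exact_mod_cast this
    rcases (by omega : u + 1 = 30*k ∨ u = 30*k) with huv | huv
    · have huvZ : (u:ℤ) + 1 = 30*(k:ℤ) := by exact_mod_cast huv
      have h2vZ : 2*(v:ℤ) + 1 = 48*(k:ℤ) := by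
        linear_combination hsZ' - (24*(k:ℤ)+1)*huvZ + hrZ
      have h2v : 2*v + 1 = 48*k := by exact_mod_cast h2vZ
      omega
    · have huvZ : (u:ℤ) = 30*(k:ℤ) := by rw [huv]; push_cast; ring
      have h2vZ : 2*(v:ℤ) + 2 = 24*(k:ℤ) := by
        linear_combination hsZ' - (24*(k:ℤ)+1)*huvZ + hrZ
      have h2v : 2*v + 2 = 24*k := by exact_mod_cast h2vZ
      omega


theorem frobenius_four_consecutive_squares_12k (k : ℕ) (hk : 1 < k) :
    frobNum (AddSubmonoid.closure
        ({(12 * k) ^ 2, (12 * k + 1) ^ 2, (12 * k + 2) ^ 2, (12 * k + 3) ^ 2} : Set ℕ)) =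
      1584 * k ^ 3 + 576 * k ^ 2 + 54 * k - 2 := by
  have hk2 : 2 ≤ k := hk
  set S := AddSubmonoid.closure
      ({(12 * k) ^ 2, (12 * k + 1) ^ 2, (12 * k + 2) ^ 2, (12 * k + 3) ^ 2} : Set ℕ) with hS
  obtain ⟨r0, hr0⟩ : ∃ r0, r0 + 2 = 54*k := ⟨54*k - 2, by omega⟩
  have hr0A : r0 < 144*k^2 := by nlinarith
  -- F as a clean expression
  obtain ⟨F, hF⟩ : ∃ F, F = (11*k+4)*(144*k^2) + r0 := ⟨_, rfl⟩
  have hFval : F = 1584 * k ^ 3 + 576 * k ^ 2 + 54 * k - 2 := by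
    have h1 : (11*k+4)*(144*k^2) + 54*k = 1584*k^3+576*k^2+54*k := by ring
    rw [hF, ← h1]
    generalize (11*k+4)*(144*k^2) = X
    omega
  -- membership builder
  have memS : ∀ x y z w : ℕ,
      x*(144*k^2) + y*(144*k^2 + (24*k+1)) + z*(144*k^2 + (48*k+4))
        + w*(144*k^2 + (72*k+9)) ∈ S := by
    intro x y z w
    have e : x*(144*k^2) + y*(144*k^2 + (24*k+1)) + z*(144*k^2 + (48*k+4))
        + w*(144*k^2 + (72*k+9))
        = x*((12*k)^2) + y*((12*k+1)^2) + z*((12*k+2)^2) + w*((12*k+3)^2) := by ring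
    rw [e]
    exact mem_closure4_s11 _ _ _ _ x y z w
  -- every m > F is in S
  have hup : ∀ m, F < m → m ∈ S := by
    intro m hm
    obtain ⟨c, r, hmr, hrlt⟩ : ∃ c r, m = c*(144*k^2) + r ∧ r < 144*k^2 :=
      ⟨m / (144*k^2), m % (144*k^2),
        by rw [Nat.mul_comm]; exact (Nat.div_add_mod m (144*k^2)).symm,
        Nat.mod_lt _ (by positivity)⟩
    by_cases hcase : r + 2 = 54*k
    · -- r = r0, need c ≥ 11k+5
      have hrr0 : r = r0 := by omega
      have hc : 11*k+5 ≤ c := by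
        by_contra hcon
        have h1 : c ≤ 11*k+4 := by omega
        have h2 : c*(144*k^2) ≤ (11*k+4)*(144*k^2) :=
          Nat.mul_le_mul_right _ h1
        linarith
      obtain ⟨t, y, z, w, heq, hsum⟩ := coverR0 k r hk2 hcase
      have hTc : t + y + z + w ≤ c := by omega
      refine hmr ▸ ?_
      have key : c*(144*k^2) + r
          = (c - (t+y+z+w))*(144*k^2) + y*(144*k^2 + (24*k+1))
            + z*(144*k^2 + (48*k+4)) + w*(144*k^2 + (72*k+9)) := by
        have expand : y*(144*k^2 + (24*k+1)) + z*(144*k^2 + (48*k+4))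
            + w*(144*k^2 + (72*k+9))
            = (y+z+w)*(144*k^2) + (y*(24*k+1) + z*(48*k+4) + w*(72*k+9)) := by ring
        have hc2 : c*(144*k^2) = (c - (t+y+z+w))*(144*k^2) + (t+y+z+w)*(144*k^2) := by
          rw [← Nat.add_mul]; rw [Nat.sub_add_cancel hTc]
        have hsplit : (t+y+z+w)*(144*k^2) = t*(144*k^2) + (y+z+w)*(144*k^2) := by ring
        linarith [heq, hc2, hsplit, expand]
      rw [key]
      exact memS _ _ _ _
    · obtain ⟨t, y, z, w, heq, hsum⟩ := cover k r hk2 hrlt hcase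
      have hc : 11*k+4 ≤ c := by
        by_contra hcon
        have h1 : c ≤ 11*k+3 := by omega
        have h2 : c*(144*k^2) ≤ (11*k+3)*(144*k^2) :=
          Nat.mul_le_mul_right _ h1
        have h3 : (11*k+3)*(144*k^2) + 144*k^2 = (11*k+4)*(144*k^2) := by ring
        linarith
      have hTc : t + y + z + w ≤ c := by omega
      refine hmr ▸ ?_
      have key : c*(144*k^2) + r
          = (c - (t+y+z+w))*(144*k^2) + y*(144*k^2 + (24*k+1))
            + z*(144*k^2 + (48*k+4)) + w*(144*k^2 + (72*k+9)) := by
        have expand : y*(144*k^2 + (24*k+1)) + z*(144*k^2 + (48*k+4))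
            + w*(144*k^2 + (72*k+9))
            = (y+z+w)*(144*k^2) + (y*(24*k+1) + z*(48*k+4) + w*(72*k+9)) := by ring
        have hc2 : c*(144*k^2) = (c - (t+y+z+w))*(144*k^2) + (t+y+z+w)*(144*k^2) := by
          rw [← Nat.add_mul]; rw [Nat.sub_add_cancel hTc]
        have hsplit : (t+y+z+w)*(144*k^2) = t*(144*k^2) + (y+z+w)*(144*k^2) := by ring
        linarith [heq, hc2, hsplit, expand]
      rw [key]
      exact memS _ _ _ _
  -- F is not in S
  have hFnot : F ∉ S := by
    intro hmem
    rw [hS, mem_closure4_iff] at hmem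
    obtain ⟨x, y, z, w, hxyzw⟩ := hmem
    have h1 : (12*k)^2 = 144*k^2 := by ring
    have h2 : (12*k+1)^2 = 144*k^2 + (24*k+1) := by ring
    have h3 : (12*k+2)^2 = 144*k^2 + (48*k+4) := by ring
    have h4 : (12*k+3)^2 = 144*k^2 + (72*k+9) := by ring
    rw [h1, h2, h3, h4] at hxyzw
    have hdecomp : F = (x+y+z+w)*(144*k^2)
        + (y*(24*k+1) + z*(48*k+4) + w*(72*k+9)) := by
      rw [hxyzw]; ring
    have hXle : x+y+z+w ≤ 11*k+4 := by
      by_contra hcon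
      have h5 : 11*k+5 ≤ x+y+z+w := by omega
      have h6 : (11*k+5)*(144*k^2) ≤ (x+y+z+w)*(144*k^2) :=
        Nat.mul_le_mul_right _ h5
      have h7 : (11*k+5)*(144*k^2) = (11*k+4)*(144*k^2) + 144*k^2 := by ring
      have hge : (x+y+z+w)*(144*k^2) ≤ F := hdecomp ▸ Nat.le_add_right _ _
      have h8 : (11*k+4)*(144*k^2) + 144*k^2 ≤ (11*k+4)*(144*k^2) + r0 := by
        rw [← h7, ← hF]; exact le_trans h6 hge
      have h9 : 144*k^2 ≤ r0 := Nat.le_of_add_le_add_left h8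
      omega
    obtain ⟨t, ht⟩ : ∃ t, x+y+z+w+t = 11*k+4 := ⟨11*k+4 - (x+y+z+w), by omega⟩
    have hsigma : y*(24*k+1) + z*(48*k+4) + w*(72*k+9) = t*(144*k^2) + r0 := by
      have e1 : (11*k+4)*(144*k^2) = (x+y+z+w)*(144*k^2) + t*(144*k^2) := by
        rw [← Nat.add_mul, ht]
      linarith
    have := lower k t y z w r0 hk2 hr0 hsigma
    omega
  -- conclude
  have hgreat : IsGreatest {n : ℕ | n ∉ S} F := by
    constructor
    · exact hFnot
    · intro x hx
      by_contra hcon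
      exact hx (hup x (by omega))
  have : frobNum S = F := hgreat.csSup_eq
  rw [this, hFval]
end

section
/- For every integer m > 1, the Frobenius number of the numerical semigroup ⟨(4m+2)², (4m+3)², (4m+4)², (4m+5)²⟩ equals 80m³ + 168m² + 105m + 14. -/
theorem frobNum_eq_of_notMem_of_forall_lt {S : AddSubmonoid ℕ} {F : ℕ} (hF : F ∉ S)
    (h : ∀ N, F < N → N ∈ S) : frobNum S = F := by
  have hle : ∀ N ∈ {n : ℕ | n ∉ S}, N ≤ F := fun N hN ↦ not_lt.1 fun hlt ↦ hN (h N hlt)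
  exact le_antisymm (csSup_le ⟨F, hF⟩ hle) (le_csSup ⟨F, hle⟩ hF)

theorem AddSubmonoid.mem_closure_four {M : Type*} [AddCommMonoid M] (a b c d x : M) :
    x ∈ closure ({a, b, c, d} : Set M) ↔ ∃ i j k l : ℕ, i • a + j • b + k • c + l • d = x := by
  simp_rw [← Set.singleton_union, closure_union, mem_sup, mem_closure_singleton,
    exists_exists_eq_and]
  constructor
  · rintro ⟨i, _, ⟨j, _, ⟨k, l, rfl⟩, rfl⟩, rfl⟩
    exact ⟨i, j, k, l, by abel⟩
  · rintro ⟨i, j, k, l, rfl⟩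
    exact ⟨i, _, ⟨j, _, ⟨k, l, rfl⟩, rfl⟩, by abel⟩

theorem Nat.mem_closure_four_iff_int (g₁ g₂ g₃ g₄ N : ℕ) :
    N ∈ AddSubmonoid.closure ({g₁, g₂, g₃, g₄} : Set ℕ) ↔
      ∃ a b c d : ℤ, 0 ≤ a ∧ 0 ≤ b ∧ 0 ≤ c ∧ 0 ≤ d ∧ a * g₁ + b * g₂ + c * g₃ + d * g₄ = N := by
  rw [AddSubmonoid.mem_closure_four]
  constructor
  · rintro ⟨i, j, k, l, rfl⟩
    exact ⟨i, j, k, l, by positivity, by positivity, by positivity, by positivity, by simp⟩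
  · rintro ⟨a, b, c, d, ha, hb, hc, hd, h⟩
    lift a to ℕ using ha
    lift b to ℕ using hb
    lift c to ℕ using hc
    lift d to ℕ using hd
    have h' : a * g₁ + b * g₂ + c * g₃ + d * g₄ = N := by exact_mod_cast h
    exact ⟨a, b, c, d, by simpa using h'⟩

namespace ConsecutiveSquares

theorem carry_equations_infeasible {m t e d : ℤ} (hm : 2 ≤ m) (hd : 0 ≤ d)
    (hb : 0 ≤ -3*m + 2 - (4*m+4)*t + (8*m+4)*e + 3*d)
    (hc : 0 ≤ 6*m - 2 + (6*m+4)*t - (4*m+2)*e - 6*d)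
    (ha : 0 ≤ 10*m + 6 + (2*m+2)*t - (12*m+10)*e - 2*d) : False := by
  have ht : -1 ≤ t := by nlinarith
  have he₀ : 0 ≤ e := by nlinarith
  have he₁ : e ≤ 1 := by nlinarith
  interval_cases e
  · have ht₀ : t ≤ 0 := by nlinarith
    interval_cases t <;> omega
  · have ht₂ : 2 ≤ t := by nlinarith
    nlinarith

theorem sum_sq_ne_frobenius {m a b c d : ℤ} (hm : 2 ≤ m) (ha : 0 ≤ a) (hb : 0 ≤ b)
    (hc : 0 ≤ c) (hd : 0 ≤ d) :
    a * (4*m+2)^2 + b * (4*m+3)^2 + c * (4*m+4)^2 + d * (4*m+5)^2 ≠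
      80*m^3 + 168*m^2 + 105*m + 14 := by
  intro h
  -- `s` and `t` are the carries of `K` and `x` against `F = (5m+4)n² + 2n·3m + (9m-2)`,
  -- `s - t = 2e`, and the three forms below are `b`, `2c` and `2a`.
  set s := 5*m + 4 - (a + b + c + d)
  set t := (2*m+1)*s + 3*m - (b + 2*c + 3*d)
  set e := -m*s + 3*m - 1 + (4*m+2)*t - c - 3*d
  refine carry_equations_infeasible (t := t) (e := e) hm hd ?_ ?_ ?_
  · linear_combination hb + (4*m+1) * h
  · linear_combination 2 * hc - 2*m * h
  · linear_combination 2 * ha - (6*m+4) * h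

/-- `80m³ + 184m² + 121m + 18` is `F + n²`. -/
def HasSmallRep (m r : ℤ) : Prop :=
  ∃ b c d q : ℤ, 0 ≤ b ∧ 0 ≤ c ∧ 0 ≤ d ∧
    b * (4*m+3)^2 + c * (4*m+4)^2 + d * (4*m+5)^2 = q * (4*m+2)^2 + r ∧
    q * (4*m+2)^2 + r ≤ 80*m^3 + 184*m^2 + 121*m + 18

theorem le_frobenius_add_sq {m q u v : ℤ} (hm : 2 ≤ m) (hu : u ≤ 4*m+1) (hv : v ≤ 8*m+3)
    (hq : q ≤ 5*m+4 ∨ q = 5*m+5 ∧ u ≤ 3*m ∧ v + 3*u ≤ 18*m - 2 ∨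
      q = 5*m+6 ∧ u ≤ m ∧ v + 2*m + 6 ≤ 3*u) :
    q * (4*m+2)^2 + (2*(4*m+2)*u + v) ≤ 80*m^3 + 184*m^2 + 121*m + 18 := by
  rcases hq with hq | ⟨rfl, hu, hv⟩ | ⟨rfl, hu, hv⟩
  · nlinarith [mul_le_mul_of_nonneg_right hq (sq_nonneg (4*m+2))]
  · nlinarith
  · nlinarith

theorem hasSmallRep_of_shift {m u v : ℤ} (s t b c d : ℤ) (hm : 2 ≤ m) (hu : u ≤ 4*m+1)
    (hv : v ≤ 8*m+3) (hb : 0 ≤ b) (hc : 0 ≤ c) (hd : 0 ≤ d)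
    (hx : b + 2*c + 3*d = u - t + (2*m+1)*s) (hy : b + 4*c + 9*d = v + (8*m+4)*t)
    (hq : b+c+d+s ≤ 5*m+4 ∨ b+c+d+s = 5*m+5 ∧ u ≤ 3*m ∧ v + 3*u ≤ 18*m - 2 ∨
      b+c+d+s = 5*m+6 ∧ u ≤ m ∧ v + 2*m + 6 ≤ 3*u) :
    HasSmallRep m (2*(4*m+2)*u + v) :=
  ⟨b, c, d, b+c+d+s, hb, hc, hd, by linear_combination (2*(4*m+2)) * hx + hy,
    le_frobenius_add_sq hm hu hv hq⟩

theorem hasSmallRep_of_mem_box {m u v : ℤ} (hm : 2 ≤ m) (hu₀ : 0 ≤ u) (hu : u ≤ 4*m+1)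
    (hv₀ : 0 ≤ v) (hv : v ≤ 8*m+3) (huv : Even (u + v)) :
    HasSmallRep m (2*(4*m+2)*u + v) := by
  obtain ⟨k, hk⟩ := huv
  set d₀ := max 0 ((v - 2*u + 2)/3) with hd₀
  by_cases h₀ : u ≤ v ∧ 6 * d₀ ≤ v - u
  · exact hasSmallRep_of_shift 0 0 (2*u - v + 3*d₀) ((v - u)/2 - 3*d₀) d₀ hm hu hv
      (by omega) (by omega) (by omega) (by omega) (by omega) (by omega)
  set d₁ := max 0 ((v - 2*u + 4*m + 6)/3) with hd₁
  by_cases h₁ : 6 * d₁ ≤ v - u + 6*m + 4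
  · exact hasSmallRep_of_shift 1 1 (2*u - v - 4*m - 4 + 3*d₁) ((v - u + 6*m + 4)/2 - 3*d₁) d₁
      hm hu hv (by omega) (by omega) (by omega) (by omega) (by omega) (by omega)
  by_cases h₃ : u ≤ v
  · set d₃ := max 0 ((v - 2*u - 4*m + 2)/3) with hd₃
    -- here `b + c + d + s = (3u - v)/2 + d₃ + 5m + 4`
    have hw₃ : d₃ = 0 → 3*u - v ≤ 2 := by omega
    have hu₃ : 3*u - v = 2 → u ≤ 3*m := by omega
    have hw₃' : 0 < d₃ → 3*u - v + 2*d₃ ≤ 0 := by omega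
    exact hasSmallRep_of_shift 3 1 (2*u - v + 4*m + 3*d₃) ((v - u + 2*m + 2)/2 - 3*d₃) d₃
      hm hu hv (by omega) (by omega) (by omega) (by omega) (by omega) (by omega)
  · -- here `b + c + d + s = (3u - v)/2 + 4m + 3`
    have hw₄ : 3*u - v ≤ 2*m + 6 := by omega
    have hu₄ : 3*u - v = 2*m + 6 → u ≤ m := by omega
    exact hasSmallRep_of_shift 4 2 (2*u - v - 4) ((v - u + 8*m + 6)/2) 0
      hm hu hv (by omega) (by omega) (by omega) (by omega) (by omega) (by omega)

theorem hasSmallRep {m : ℤ} (hm : 2 ≤ m) (r : ℤ) : HasSmallRep m r := by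
  obtain ⟨u, v, Q, hu₀, hu, hv₀, hv, huv, hr⟩ : ∃ u v Q : ℤ, 0 ≤ u ∧ u ≤ 4*m+1 ∧ 0 ≤ v ∧
      v ≤ 8*m+3 ∧ Even (u + v) ∧ r = Q * (4*m+2)^2 + (2*(4*m+2)*u + v) := by
    have h₁ := Int.mul_ediv_add_emod r (2*(4*m+2))
    have h₂ := Int.mul_ediv_add_emod (r / (2*(4*m+2))) (2*m+1)
    have hv₀ := Int.emod_nonneg r (show 2*(4*m+2) ≠ 0 by omega)
    have hv := Int.emod_lt_of_pos r (show 0 < 2*(4*m+2) by omega)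
    have hu₀ := Int.emod_nonneg (r / (2*(4*m+2))) (show 2*m+1 ≠ 0 by omega)
    have hu := Int.emod_lt_of_pos (r / (2*(4*m+2))) (show 0 < 2*m+1 by omega)
    set v := r % (2*(4*m+2))
    set u := r / (2*(4*m+2)) % (2*m+1)
    set Q := r / (2*(4*m+2)) / (2*m+1)
    rcases Int.even_or_odd (u + v) with hpar | hpar
    · exact ⟨u, v, Q, hu₀, by omega, hv₀, by omega, hpar,
        by linear_combination -h₁ - 2*(4*m+2) * h₂⟩
    · refine ⟨u + (2*m+1), v, Q - 1, by omega, by omega, hv₀, by omega, ?_,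
        by linear_combination -h₁ - 2*(4*m+2) * h₂⟩
      rw [show u + (2*m+1) + v = u + v + 2*m + 1 by ring]
      exact (hpar.add_even (even_two_mul m)).add_one
  obtain ⟨b, c, d, q, hb, hc, hd, hsum, hle⟩ := hasSmallRep_of_mem_box hm hu₀ hu hv₀ hv huv
  exact ⟨b, c, d, q - Q, hb, hc, hd, by rw [hr]; linear_combination hsum,
    by rw [hr]; linear_combination hle⟩

end ConsecutiveSquares

theorem frobenius_four_consecutive_squares_4m2 (m : ℕ) (hm : 1 < m) :
    frobNum (AddSubmonoid.closure
        ({(4 * m + 2) ^ 2, (4 * m + 3) ^ 2, (4 * m + 4) ^ 2, (4 * m + 5) ^ 2} : Set ℕ)) =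
      80 * m ^ 3 + 168 * m ^ 2 + 105 * m + 14 := by
  have hm' : (2 : ℤ) ≤ m := by exact_mod_cast hm
  refine frobNum_eq_of_notMem_of_forall_lt ?_ fun N hN ↦ ?_ <;>
    rw [Nat.mem_closure_four_iff_int] <;> push_cast
  · rintro ⟨a, b, c, d, ha, hb, hc, hd, h⟩
    exact ConsecutiveSquares.sum_sq_ne_frobenius hm' ha hb hc hd h
  · obtain ⟨b, c, d, q, hb, hc, hd, hsum, hle⟩ := ConsecutiveSquares.hasSmallRep hm' N
    have hN' : (80 * m ^ 3 + 168 * m ^ 2 + 105 * m + 14 : ℤ) < N := by exact_mod_cast hN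
    have hq : q ≤ 0 := by nlinarith
    exact ⟨-q, b, c, d, by omega, hb, hc, hd, by linear_combination hsum⟩
end

section
/- For every integer k > 1, the genus of the numerical semigroup generated by the four consecutive triangular numbers binomial(6k+1,2), binomial(6k+2,2), binomial(6k+3,2), binomial(6k+4,2) equals (75/2)k³ + 36k² + (15/2)k, i.e. 2·G(S) = 75k³ + 72k² + 15k. -/
open Finset

lemma mem_closure_four_s16 {g1 g2 g3 g4 N : ℕ} :
    N ∈ AddSubmonoid.closure ({g1, g2, g3, g4} : Set ℕ) ↔
      ∃ w x y z : ℕ, N = w * g1 + x * g2 + y * g3 + z * g4 := by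
  constructor
  · intro h
    induction h using AddSubmonoid.closure_induction with
    | mem a ha =>
      rcases ha with rfl | rfl | rfl | rfl
      · exact ⟨1, 0, 0, 0, by ring⟩
      · exact ⟨0, 1, 0, 0, by ring⟩
      · exact ⟨0, 0, 1, 0, by ring⟩
      · exact ⟨0, 0, 0, 1, by ring⟩
    | zero => exact ⟨0, 0, 0, 0, by ring⟩
    | add a b _ _ ha hb =>
      obtain ⟨w, x, y, z, rfl⟩ := ha
      obtain ⟨w', x', y', z', rfl⟩ := hb
      exact ⟨w + w', x + x', y + y', z + z', by ring⟩
  · rintro ⟨w, x, y, z, rfl⟩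
    have h1 : g1 ∈ AddSubmonoid.closure ({g1, g2, g3, g4} : Set ℕ) :=
      AddSubmonoid.subset_closure (by simp)
    have h2 : g2 ∈ AddSubmonoid.closure ({g1, g2, g3, g4} : Set ℕ) :=
      AddSubmonoid.subset_closure (by simp)
    have h3 : g3 ∈ AddSubmonoid.closure ({g1, g2, g3, g4} : Set ℕ) :=
      AddSubmonoid.subset_closure (by simp)
    have h4 : g4 ∈ AddSubmonoid.closure ({g1, g2, g3, g4} : Set ℕ) :=
      AddSubmonoid.subset_closure (by simp)
    have hs := fun (n a : ℕ) (h : a ∈ AddSubmonoid.closure ({g1, g2, g3, g4} : Set ℕ)) =>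
      nsmul_mem h n
    simp only [smul_eq_mul] at hs
    exact add_mem (add_mem (add_mem (hs w g1 h1) (hs x g2 h2)) (hs y g3 h3)) (hs z g4 h4)

/-- uniqueness of base-b digits -/
lemma digit_unique {b M q M' r : ℕ} (hq : q < b) (hr : r < b)
    (h : M * b + q = M' * b + r) : M = M' ∧ q = r := by
  rcases lt_trichotomy M M' with hlt | rfl | hgt
  · exfalso
    have h1 : (M + 1) * b ≤ M' * b := Nat.mul_le_mul_right b hlt
    have h2 : (M + 1) * b = M * b + b := by ring
    omega
  · omega
  · exfalso
    have h1 : (M' + 1) * b ≤ M * b := Nat.mul_le_mul_right b hgt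
    have h2 : (M' + 1) * b = M' * b + b := by ring
    omega

lemma zed (q u n : ℕ) (h1 : q + q % 3 ≤ u) (h2 : u ≤ q + n) (h3 : 2*u ≤ q + 3*n) :
    ∃ z, 3*z ≤ q ∧ 2*q ≤ u + 3*z ∧ u + z ≤ q + n := by
  refine ⟨if 2*q ≤ u then 0 else (2*q - u + 2)/3, ?_, ?_, ?_⟩ <;> split <;> omega

/-- P4 k N : N is a ℕ-combination of the four generators -/
def P4 (k N : ℕ) : Prop :=
  ∃ w x y z : ℕ, N = w*(3*k*(6*k+1)) + x*((3*k+1)*(6*k+1))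
      + y*(3*k*(6*k+1)+(12*k+3)) + z*(3*k*(6*k+1)+(18*k+6))

def Tri (k q M n : ℕ) : Prop :=
  3*k*n + (q + q % 3) ≤ M ∧ M ≤ 3*k*n + q + n ∧ 2*M ≤ 6*k*n + 3*n + q

lemma p4_iff_tri (k M q : ℕ) (hq : q < 6*k+1) :
    P4 k (M*(6*k+1)+q) ↔ ∃ n, Tri k q M n := by
  constructor
  · rintro ⟨w, x, y, z, hN⟩
    have hb : 0 < 6*k+1 := by omega
    obtain ⟨U, hU⟩ : ∃ U, U = x+2*y+3*z := ⟨_, rfl⟩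
    obtain ⟨t, r, hvtr, hrb⟩ : ∃ t r, y+3*z = (6*k+1)*t + r ∧ r < 6*k+1 :=
      ⟨_, _, ((Nat.div_add_mod (y+3*z) (6*k+1)).symm), Nat.mod_lt _ hb⟩
    have key : M*(6*k+1)+q = (3*k*(w+x+y+z) + U + t)*(6*k+1) + r := by
      rw [hN, hU]
      zify at hvtr ⊢
      linear_combination hvtr
    obtain ⟨hM, hqr⟩ := digit_unique hq hrb key
    subst hqr
    obtain ⟨A, hA⟩ : ∃ A, k*(w+x+y+z) = A := ⟨_, rfl⟩
    obtain ⟨T, hT⟩ : ∃ T, k*t = T := ⟨_, rfl⟩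
    have hM' : M = 3*A + U + t := by rw [hM, ← hA]; ring
    have hv6 : y + 3*z = 6*T + t + q := by rw [hvtr, ← hT]; ring
    clear hN key hM hvtr
    refine ⟨(w+x+y+z) + 2*t, ?_, ?_, ?_⟩
    · rw [show 3*k*((w+x+y+z)+2*t) = 3*A + 6*T by rw [← hA, ← hT]; ring]
      omega
    · rw [show 3*k*((w+x+y+z)+2*t) = 3*A + 6*T by rw [← hA, ← hT]; ring]
      omega
    · rw [show 6*k*((w+x+y+z)+2*t) = 6*A + 12*T by rw [← hA, ← hT]; ring]
      omega
  · rintro ⟨n, h1, h2, h3⟩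
    obtain ⟨KN, hKN⟩ : ∃ c, k*n = c := ⟨_, rfl⟩
    have e1 : 3*k*n = 3*KN := by rw [← hKN]; ring
    have e2 : 6*k*n = 6*KN := by rw [← hKN]; ring
    rw [e1] at h1 h2
    rw [e2] at h3
    obtain ⟨u, hu⟩ : ∃ u, M = 3*KN + u := ⟨M - 3*KN, by omega⟩
    obtain ⟨z, hz1, hz2, hz3⟩ := zed q u n (by omega) (by omega) (by omega)
    obtain ⟨y, hy⟩ : ∃ y, 3*z + y = q := ⟨q - 3*z, by omega⟩
    obtain ⟨x, hx⟩ : ∃ x, 2*q + x = u + 3*z := ⟨u + 3*z - 2*q, by omega⟩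
    obtain ⟨w, hw⟩ : ∃ w, u + z + w = q + n := ⟨q + n - (u + z), by omega⟩
    refine ⟨w, x, y, z, ?_⟩
    have hq2 : q = y + 3*z := by omega
    have hu2 : u = x + 2*y + 3*z := by omega
    have hn2 : n = w + x + y + z := by omega
    have hM2 : M = 3*k*(w+x+y+z) + (x+2*y+3*z) := by
      rw [hu, ← hKN, hu2, hn2]; ring
    rw [hM2, hq2]; ring



lemma notri_iff (k M q : ℕ) (hk : 2 ≤ k) (hq : q < 6*k+1) :
    (¬ ∃ n, Tri k q M n) ↔ (M < q + q%3 ∨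
      ∃ n d, d < 3*k ∧ M = 3*k*n + (q + q%3) + d ∧ n < 5*k ∧
        (n < d + q%3 ∨ 3*n < 2*(d + q%3) + q)) := by
  constructor
  · intro hno
    by_cases hM : M < q + q%3
    · exact Or.inl hM
    · right
      have h3k : 0 < 3*k := by omega
      obtain ⟨n₀, d, hd3, hMeq⟩ : ∃ n₀ d, d < 3*k ∧ M = 3*k*n₀ + (q+q%3) + d := by
        refine ⟨(M-(q+q%3))/(3*k), (M-(q+q%3))%(3*k), Nat.mod_lt _ h3k, ?_⟩
        have h := Nat.div_add_mod (M-(q+q%3)) (3*k)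
        omega
      have e6 : 6*k*n₀ = 2*(3*k*n₀) := by ring
      have hcond : n₀ < d + q%3 ∨ 3*n₀ < 2*(d + q%3) + q := by
        by_contra hc
        push_neg at hc
        exact hno ⟨n₀, by omega, by omega, by omega⟩
      exact ⟨n₀, d, hd3, hMeq, by omega, hcond⟩
  · rintro (hM | ⟨n, d, hd3, hMeq, hn5, hcond⟩) ⟨n', ht1, ht2, ht3⟩
    · omega
    · have e6 : 6*k*n' = 2*(3*k*n') := by ring
      rcases Nat.lt_or_ge n n' with h | h
      · have hmul : 3*k*(n+1) ≤ 3*k*n' := Nat.mul_le_mul_left (3*k) h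
        have e1 : 3*k*(n+1) = 3*k*n + 3*k := by ring
        omega
      · have hmul : 3*k*n' ≤ 3*k*n := Nat.mul_le_mul_left (3*k) h
        omega

def part1 (k q : ℕ) : Finset ℕ :=
  (Finset.range (q + q%3)).image (fun M => M*(6*k+1)+q)

def part2 (k q : ℕ) : Finset ℕ :=
  (Finset.range (3*k)).biUnion (fun d =>
    ((Finset.range (5*k)).filter (fun n => n < d + q%3 ∨ 3*n < 2*(d + q%3) + q)).image
      (fun n => (3*k*n + (q + q%3) + d)*(6*k+1)+q))

def gapF (k : ℕ) : Finset ℕ :=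
  (Finset.range (6*k+1)).biUnion (fun q => part1 k q ∪ part2 k q)


lemma notP4_iff (k N : ℕ) (hk : 2 ≤ k) : ¬ P4 k N ↔ N ∈ gapF k := by
  have hb : 0 < 6*k+1 := by omega
  have hq : N % (6*k+1) < 6*k+1 := Nat.mod_lt _ hb
  have hN : (N / (6*k+1)) * (6*k+1) + N % (6*k+1) = N := by
    rw [mul_comm]; exact Nat.div_add_mod N (6*k+1)
  set q := N % (6*k+1) with hqdef
  set M := N / (6*k+1) with hMdef
  rw [← hN, p4_iff_tri k M q hq, notri_iff k M q hk hq]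
  simp only [gapF, part1, part2, Finset.mem_biUnion, Finset.mem_union, Finset.mem_image,
    Finset.mem_filter, Finset.mem_range]
  constructor
  · rintro (hM | ⟨n, d, hd3, hMeq, hn5, hcond⟩)
    · exact ⟨q, hq, Or.inl ⟨M, hM, rfl⟩⟩
    · exact ⟨q, hq, Or.inr ⟨d, hd3, n, ⟨hn5, hcond⟩, by rw [← hMeq]⟩⟩
  · rintro ⟨q', hq', (⟨M', hM', hval⟩ | ⟨d, hd3, n, ⟨hn5, hcond⟩, hval⟩)⟩
    · obtain ⟨h1, h2⟩ := digit_unique (M := M') (M' := M) hq' hq (by rw [hval, hN])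
      left; omega
    · obtain ⟨h1, h2⟩ := digit_unique (M := 3*k*n + (q' + q'%3) + d) (M' := M) hq' hq
        (by rw [hval, hN])
      right
      exact ⟨n, d, by omega, by omega, hn5, by omega⟩



/- ---------- small sum lemmas ---------- -/

lemma sum_range_triple (f : ℕ → ℕ) (m : ℕ) :
    ∑ x ∈ Finset.range (3*m), f x
      = ∑ c ∈ Finset.range m, (f (3*c) + f (3*c+1) + f (3*c+2)) := by
  induction m with
  | zero => simp
  | succ m ih =>
    rw [show 3*(m+1) = 3*m+1+1+1 by ring, Finset.sum_range_succ, Finset.sum_range_succ,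
      Finset.sum_range_succ, ih, Finset.sum_range_succ]
    ring

lemma sum_range_addsplit (f : ℕ → ℕ) (m n : ℕ) :
    ∑ x ∈ Finset.range (m+n), f x
      = ∑ x ∈ Finset.range m, f x + ∑ c ∈ Finset.range n, f (m+c) := by
  induction n with
  | zero => simp
  | succ n ih =>
    rw [show m+(n+1) = (m+n)+1 by ring, Finset.sum_range_succ, ih, Finset.sum_range_succ]
    ring

lemma sumC_lemA (m c : ℕ) (h : m ≤ c+1) :
    2 * (∑ j ∈ Finset.range m, (c - j)) + m*m = 2*m*c + m := by
  induction m with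
  | zero => simp
  | succ m ih =>
    have hm : m ≤ c := by omega
    have ih' := ih (by omega)
    rw [Finset.sum_range_succ]
    zify [hm] at ih' ⊢
    linear_combination ih'

lemma sumC_lemB (m c : ℕ) (h : c + 1 ≤ m) :
    2 * (∑ j ∈ Finset.range m, (c - j)) = c*(c+1) := by
  induction m with
  | zero => omega
  | succ m ih =>
    by_cases hc : c + 1 ≤ m
    · have h1 := ih hc
      rw [Finset.sum_range_succ, show c - m = 0 by omega]
      omega
    · have hcm : c = m := by omega
      subst hcm
      have h1 : (∑ j ∈ Finset.range (c+1), (c - j)) = ∑ j ∈ Finset.range (c+1), j := by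
        have := Finset.sum_range_reflect (fun j => j) (c+1)
        simpa using this
      have h2 := Finset.sum_range_id_mul_two (c+1)
      have h3 : (c+1)*(c+1-1) = c*(c+1) := by simp; ring
      omega

lemma sum_idsucc (m : ℕ) : 3*(∑ c ∈ Finset.range m, c*(c+1)) + m = m*m*m := by
  induction m with
  | zero => simp
  | succ m ih =>
    rw [Finset.sum_range_succ]
    zify at ih ⊢
    linear_combination ih

/- ---------- injectivity helpers ---------- -/

lemma threek_unique {k n d n' d' : ℕ} (hd : d < 3*k) (hd' : d' < 3*k)
    (h : 3*k*n + d = 3*k*n' + d') : n = n' ∧ d = d' := by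
  have h' : n*(3*k)+d = n'*(3*k)+d' := by
    calc n*(3*k)+d = 3*k*n+d := by ring
    _ = 3*k*n'+d' := h
    _ = n'*(3*k)+d' := by ring
  exact digit_unique hd hd' h'

/- ---------- the filter count ---------- -/

lemma cnt_val (k q d : ℕ) (hk : 2 ≤ k) (hq : q < 6*k+1) (hd : d < 3*k) :
    ((Finset.range (5*k)).filter
        (fun n => n < d + q%3 ∨ 3*n < 2*(d + q%3) + q)).card
      = d + q%3 + (q/3 - d/3) := by
  have h : (Finset.range (5*k)).filter
        (fun n => n < d + q%3 ∨ 3*n < 2*(d + q%3) + q)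
      = Finset.range (d + q%3 + (q/3 - d/3)) := by
    ext n
    simp only [Finset.mem_filter, Finset.mem_range]
    omega
  rw [h, Finset.card_range]

/- ---------- per-q cardinality ---------- -/

lemma partq_card (k q : ℕ) (hk : 2 ≤ k) (hq : q < 6*k+1) :
    (part1 k q ∪ part2 k q).card
      = q + q%3 + ((∑ d ∈ Finset.range (3*k), d) + 3*k*(q%3)
          + 3*(∑ j ∈ Finset.range k, (q/3 - j))) := by
  have hqb : q < 6*k+1 := hq
  -- part1 card
  have hc1 : (part1 k q).card = q + q%3 := by
    rw [part1, Finset.card_image_of_injOn, Finset.card_range]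
    intro a _ b _ hab
    exact (digit_unique hqb hqb hab).1
  -- part2 card
  have hc2 : (part2 k q).card
      = ∑ d ∈ Finset.range (3*k), (d + q%3 + (q/3 - d/3)) := by
    rw [part2, Finset.card_biUnion]
    · refine Finset.sum_congr rfl ?_
      intro d hd
      rw [Finset.mem_range] at hd
      rw [Finset.card_image_of_injOn, cnt_val k q d hk hq hd]
      intro a _ b _ hab
      have h1 := (digit_unique hqb hqb hab).1
      exact (threek_unique (by omega) (by omega) (by omega : 3*k*a + d = 3*k*b + d)).1
    · intro d1 h1 d2 h2 hne
      rw [Finset.mem_coe, Finset.mem_range] at h1 h2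
      rw [Function.onFun, Finset.disjoint_left]
      rintro x hx1 hx2
      simp only [Finset.mem_image, Finset.mem_filter, Finset.mem_range] at hx1 hx2
      obtain ⟨n1, _, hv1⟩ := hx1
      obtain ⟨n2, _, hv2⟩ := hx2
      have he := (digit_unique hqb hqb (hv1.trans hv2.symm)).1
      exact hne (threek_unique h1 h2 (by omega : 3*k*n1 + d1 = 3*k*n2 + d2)).2
  -- disjointness of part1 and part2
  have hdisj : Disjoint (part1 k q) (part2 k q) := by
    rw [Finset.disjoint_left]
    rintro x hx1 hx2
    simp only [part1, part2, Finset.mem_image, Finset.mem_biUnion, Finset.mem_filter,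
      Finset.mem_range] at hx1 hx2
    obtain ⟨M, hM, hv1⟩ := hx1
    obtain ⟨d, hd, n, _, hv2⟩ := hx2
    have he := (digit_unique hqb hqb (hv1.trans hv2.symm)).1
    omega
  rw [Finset.card_union_of_disjoint hdisj, hc1, hc2]
  -- now evaluate the d-sum
  have hsum : ∑ d ∈ Finset.range (3*k), (d + q%3 + (q/3 - d/3))
      = (∑ d ∈ Finset.range (3*k), d) + 3*k*(q%3)
        + 3*(∑ j ∈ Finset.range k, (q/3 - j)) := by
    rw [Finset.sum_add_distrib, Finset.sum_add_distrib, Finset.sum_const, Finset.card_range,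
      smul_eq_mul]
    have h3 : ∑ d ∈ Finset.range (3*k), (q/3 - d/3)
        = 3*(∑ j ∈ Finset.range k, (q/3 - j)) := by
      rw [sum_range_triple (fun d => q/3 - d/3) k, Finset.mul_sum]
      refine Finset.sum_congr rfl ?_
      intro j _
      have e1 : (3*j)/3 = j := by omega
      have e2 : (3*j+1)/3 = j := by omega
      have e3 : (3*j+2)/3 = j := by omega
      rw [e1, e2, e3]
      ring
    rw [h3]
  rw [hsum]








-- the per-q summand
lemma total_card (k : ℕ) (hk : 2 ≤ k) :
    2 * (∑ q ∈ Finset.range (6*k+1),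
      (q + q%3 + ((∑ d ∈ Finset.range (3*k), d) + 3*k*(q%3)
          + 3*(∑ j ∈ Finset.range k, (q/3 - j)))))
      = 75*k^3 + 72*k^2 + 15*k := by
  -- mod-3 sum
  have hA : ∑ q ∈ Finset.range (6*k+1), q%3 = 6*k := by
    rw [Finset.sum_range_succ, show (6*k)%3 = 0 by omega, add_zero,
      show 6*k = 3*(2*k) by ring, sum_range_triple (fun q => q%3) (2*k)]
    have : ∀ c ∈ Finset.range (2*k), (3*c)%3 + (3*c+1)%3 + (3*c+2)%3 = 3 := by
      intro c _; omega
    rw [Finset.sum_congr rfl this, Finset.sum_const, Finset.card_range, smul_eq_mul]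
    ring
  -- inner floor sums
  have hB : ∑ q ∈ Finset.range (6*k+1), (∑ j ∈ Finset.range k, (q/3 - j))
      = (∑ j ∈ Finset.range k, (2*k - j))
        + 3*(∑ c ∈ Finset.range (2*k), (∑ j ∈ Finset.range k, (c - j))) := by
    rw [Finset.sum_range_succ]
    have h1 : (∑ j ∈ Finset.range k, ((6*k)/3 - j)) = ∑ j ∈ Finset.range k, (2*k - j) := by
      refine Finset.sum_congr rfl ?_; intro j _; have : (6*k)/3 = 2*k := by omega
      rw [this]
    rw [h1, show 6*k = 3*(2*k) by ring,
      sum_range_triple (fun q => ∑ j ∈ Finset.range k, (q/3 - j)) (2*k)]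
    have h2 : ∀ c ∈ Finset.range (2*k),
        ((∑ j ∈ Finset.range k, ((3*c)/3 - j)) + (∑ j ∈ Finset.range k, ((3*c+1)/3 - j))
          + (∑ j ∈ Finset.range k, ((3*c+2)/3 - j)))
        = 3*(∑ j ∈ Finset.range k, (c - j)) := by
      intro c _
      have e1 : (∑ j ∈ Finset.range k, ((3*c)/3 - j)) = ∑ j ∈ Finset.range k, (c - j) := by
        refine Finset.sum_congr rfl ?_; intro j _; have : (3*c)/3 = c := by omega
        rw [this]
      have e2 : (∑ j ∈ Finset.range k, ((3*c+1)/3 - j)) = ∑ j ∈ Finset.range k, (c - j) := by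
        refine Finset.sum_congr rfl ?_; intro j _; have : (3*c+1)/3 = c := by omega
        rw [this]
      have e3 : (∑ j ∈ Finset.range k, ((3*c+2)/3 - j)) = ∑ j ∈ Finset.range k, (c - j) := by
        refine Finset.sum_congr rfl ?_; intro j _; have : (3*c+2)/3 = c := by omega
        rw [this]
      rw [e1, e2, e3]; ring
    rw [Finset.sum_congr rfl h2, ← Finset.mul_sum]
    ring
  -- name the atoms
  set T : ℕ := ∑ q ∈ Finset.range (6*k+1), q with hT
  set S3k : ℕ := ∑ d ∈ Finset.range (3*k), d with hS3k
  set S1 : ℕ := ∑ j ∈ Finset.range k, j with hS1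
  set SC2k : ℕ := ∑ j ∈ Finset.range k, (2*k - j) with hSC2k
  set W : ℕ := ∑ c ∈ Finset.range (2*k), (∑ j ∈ Finset.range k, (c - j)) with hW
  -- sum splitting
  have hsplit : (∑ q ∈ Finset.range (6*k+1),
      (q + q%3 + (S3k + 3*k*(q%3) + 3*(∑ j ∈ Finset.range k, (q/3 - j)))))
      = T + 6*k + ((6*k+1)*S3k + 3*k*(6*k)
          + 3*(SC2k + 3*W)) := by
    rw [Finset.sum_add_distrib, Finset.sum_add_distrib, Finset.sum_add_distrib,
      Finset.sum_add_distrib, Finset.sum_const, Finset.card_range, smul_eq_mul,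
      ← Finset.mul_sum, ← Finset.mul_sum, hA, hB]
  rw [hsplit]
  -- split W
  have hWsplit : W = (∑ c ∈ Finset.range k, (∑ j ∈ Finset.range k, (c - j)))
      + ∑ c ∈ Finset.range k, (∑ j ∈ Finset.range k, (k + c - j)) := by
    rw [hW, show 2*k = k + k by ring,
      sum_range_addsplit (fun c => ∑ j ∈ Finset.range k, (c - j)) k k]
  set W1 : ℕ := ∑ c ∈ Finset.range k, (∑ j ∈ Finset.range k, (c - j)) with hW1
  set W2 : ℕ := ∑ c ∈ Finset.range k, (∑ j ∈ Finset.range k, (k + c - j)) with hW2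
  -- identities
  have eT : 2*T = (6*k+1)*(6*k) := by
    have := Finset.sum_range_id_mul_two (6*k+1)
    rw [show 6*k+1-1 = 6*k by omega] at this
    omega
  have eS3k : 2*S3k + 3*k = 9*(k*k) := by
    have h1 := Finset.sum_range_id_mul_two (3*k)
    obtain ⟨m, rfl⟩ : ∃ m, k = m+1 := ⟨k-1, by omega⟩
    rw [show 3*(m+1)-1 = 3*m+2 by omega] at h1
    have h2 : (3*(m+1))*(3*m+2) + 3*(m+1) = 9*((m+1)*(m+1)) := by ring
    omega
  have eS1 : 2*S1 + k = k*k := by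
    have h1 := Finset.sum_range_id_mul_two k
    obtain ⟨m, rfl⟩ : ∃ m, k = m+1 := ⟨k-1, by omega⟩
    rw [show m+1-1 = m by omega] at h1
    have h2 : (m+1)*m + (m+1) = (m+1)*(m+1) := by ring
    omega
  have eSC2k : 2*SC2k + k*k = 2*k*(2*k) + k := sumC_lemA k (2*k) (by omega)
  have eW1 : 6*W1 + k = k*k*k := by
    have h1 : 2*W1 = ∑ c ∈ Finset.range k, c*(c+1) := by
      rw [hW1, Finset.mul_sum]
      refine Finset.sum_congr rfl ?_
      intro c hc
      rw [Finset.mem_range] at hc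
      exact sumC_lemB k c (by omega)
    have h2 := sum_idsucc k
    omega
  have eW2 : 2*W2 + k*(k*k) = 2*k*(k*k + S1) + k*k := by
    have h1 : ∀ c ∈ Finset.range k,
        2*(∑ j ∈ Finset.range k, (k + c - j)) + k*k = 2*k*(k+c) + k :=
      fun c _ => sumC_lemA k (k+c) (by omega)
    have h2 : ∑ c ∈ Finset.range k, (2*(∑ j ∈ Finset.range k, (k + c - j)) + k*k)
        = ∑ c ∈ Finset.range k, (2*k*(k+c) + k) := Finset.sum_congr rfl h1
    rw [Finset.sum_add_distrib, Finset.sum_add_distrib, Finset.sum_const,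
      Finset.card_range, smul_eq_mul, ← Finset.mul_sum, ← Finset.mul_sum,
      Finset.sum_add_distrib, Finset.sum_const, Finset.card_range, smul_eq_mul] at h2
    rw [← hS1] at h2
    rw [hW2]
    omega
  rw [hWsplit]
  zify at eT eS3k eS1 eSC2k eW1 eW2 ⊢
  linear_combination (1:ℤ)*eT + (6*k+1)*eS3k + 3*eSC2k + 3*eW1 + 9*eW2 + (9*k)*eS1


lemma gapF_card (k : ℕ) (hk : 2 ≤ k) :
    2 * (gapF k).card = 75*k^3 + 72*k^2 + 15*k := by
  have hmod : ∀ q < 6*k+1, ∀ x ∈ part1 k q ∪ part2 k q, x % (6*k+1) = q := by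
    intro q hq x hx
    rw [Finset.mem_union] at hx
    rcases hx with hx | hx
    · simp only [part1, Finset.mem_image, Finset.mem_range] at hx
      obtain ⟨M, _, rfl⟩ := hx
      rw [mul_comm, Nat.mul_add_mod, Nat.mod_eq_of_lt hq]
    · simp only [part2, Finset.mem_biUnion, Finset.mem_image, Finset.mem_filter,
        Finset.mem_range] at hx
      obtain ⟨d, _, n, _, rfl⟩ := hx
      rw [mul_comm, Nat.mul_add_mod, Nat.mod_eq_of_lt hq]
  have hcard : (gapF k).card
      = ∑ q ∈ Finset.range (6*k+1), (part1 k q ∪ part2 k q).card := by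
    rw [gapF]
    apply Finset.card_biUnion
    intro q1 h1 q2 h2 hne
    rw [Finset.mem_coe, Finset.mem_range] at h1 h2
    rw [Function.onFun, Finset.disjoint_left]
    intro x hx1 hx2
    exact hne ((hmod q1 h1 x hx1).symm.trans (hmod q2 h2 x hx2))
  have hcong : ∑ q ∈ Finset.range (6*k+1), (part1 k q ∪ part2 k q).card
      = ∑ q ∈ Finset.range (6*k+1),
          (q + q%3 + ((∑ d ∈ Finset.range (3*k), d) + 3*k*(q%3)
            + 3*(∑ j ∈ Finset.range k, (q/3 - j)))) := by
    refine Finset.sum_congr rfl ?_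
    intro q hq
    rw [Finset.mem_range] at hq
    exact partq_card k q hk hq
  rw [hcard, hcong]
  exact total_card k hk


theorem genus_four_consecutive_triangular_6k (k : ℕ) (hk : 1 < k) :
    2 * Genus (AddSubmonoid.closure
        ({Nat.choose (6 * k + 1) 2, Nat.choose (6 * k + 2) 2,
          Nat.choose (6 * k + 3) 2, Nat.choose (6 * k + 4) 2} : Set ℕ)) =
      75 * k ^ 3 + 72 * k ^ 2 + 15 * k := by
  have hk' : 2 ≤ k := hk
  have hch1 : Nat.choose (6*k+1) 2 = 3*k*(6*k+1) := by
    rw [Nat.choose_two_right, show 6*k+1-1 = 6*k by omega,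
      show (6*k+1)*(6*k) = 2*(3*k*(6*k+1)) by ring]
    exact Nat.mul_div_cancel_left _ (by norm_num)
  have hch2 : Nat.choose (6*k+2) 2 = (3*k+1)*(6*k+1) := by
    rw [Nat.choose_two_right, show 6*k+2-1 = 6*k+1 by omega,
      show (6*k+2)*(6*k+1) = 2*((3*k+1)*(6*k+1)) by ring]
    exact Nat.mul_div_cancel_left _ (by norm_num)
  have hch3 : Nat.choose (6*k+3) 2 = 3*k*(6*k+1)+(12*k+3) := by
    rw [Nat.choose_two_right, show 6*k+3-1 = 6*k+2 by omega,
      show (6*k+3)*(6*k+2) = 2*(3*k*(6*k+1)+(12*k+3)) by ring]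
    exact Nat.mul_div_cancel_left _ (by norm_num)
  have hch4 : Nat.choose (6*k+4) 2 = 3*k*(6*k+1)+(18*k+6) := by
    rw [Nat.choose_two_right, show 6*k+4-1 = 6*k+3 by omega,
      show (6*k+4)*(6*k+3) = 2*(3*k*(6*k+1)+(18*k+6)) by ring]
    exact Nat.mul_div_cancel_left _ (by norm_num)
  have hset : {n : ℕ | n ∉ AddSubmonoid.closure
        ({Nat.choose (6 * k + 1) 2, Nat.choose (6 * k + 2) 2,
          Nat.choose (6 * k + 3) 2, Nat.choose (6 * k + 4) 2} : Set ℕ)}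
      = ↑(gapF k) := by
    ext N
    simp only [Set.mem_setOf_eq, Finset.coe_sort_coe, Finset.mem_coe]
    rw [hch1, hch2, hch3, hch4, ← notP4_iff k N hk']
    rw [show (P4 k N) ↔ N ∈ AddSubmonoid.closure
        ({3*k*(6*k+1), (3*k+1)*(6*k+1), 3*k*(6*k+1)+(12*k+3),
          3*k*(6*k+1)+(18*k+6)} : Set ℕ) from (mem_closure_four_s16).symm]
  rw [Genus, hset, Set.ncard_coe_finset]
  exact gapF_card k hk'
end

section
/- Let a₁,…,a_m be positive integers with gcd(a₁,…,a_m) = 1 and m ≥ 2. Then the Frobenius number satisfies F(⟨a₁,…,a_m⟩) ≥ ((m−1)!·a₁a₂⋯a_m)^{1/(m−1)} − (a₁ + ⋯ + a_m). -/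
lemma mem_closure_iff_rep {m : ℕ} (a : Fin m → ℕ) (n : ℕ) :
    n ∈ AddSubmonoid.closure (Set.range a) ↔ ∃ x : Fin m → ℕ, ∑ i, x i * a i = n := by
  rw [← Submodule.span_nat_eq_addSubmonoidClosure, Submodule.mem_toAddSubmonoid,
    Finsupp.mem_span_range_iff_exists_finsupp]
  constructor
  · rintro ⟨c, hc⟩
    exact ⟨c, by simpa [Finsupp.sum_fintype, smul_eq_mul] using hc⟩
  · rintro ⟨x, hx⟩
    exact ⟨Finsupp.equivFunOnFinite.symm x, by simpa [Finsupp.sum_fintype, smul_eq_mul] using hx⟩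

lemma finset_bezout {ι : Type*} [DecidableEq ι] (s : Finset ι) (f : ι → ℕ) :
    ∃ c : ι → ℤ, (↑(s.gcd f) : ℤ) = ∑ i ∈ s, c i * (f i : ℤ) := by
  induction s using Finset.induction_on with
  | empty => exact ⟨0, by simp⟩
  | insert i s hi ih =>
    obtain ⟨c, hc⟩ := ih
    refine ⟨fun j => if j = i then Nat.gcdA (f i) (s.gcd f) else
      Nat.gcdB (f i) (s.gcd f) * c j, ?_⟩
    rw [Finset.gcd_insert, Finset.sum_insert hi]
    have hb := Nat.gcd_eq_gcd_ab (f i) (s.gcd f)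
    have h1 : (↑(GCDMonoid.gcd (f i) (s.gcd f)) : ℤ) = ↑(Nat.gcd (f i) (s.gcd f)) := by
      norm_cast
    have h2 : ∑ j ∈ s, (if j = i then Nat.gcdA (f i) (s.gcd f) else
        Nat.gcdB (f i) (s.gcd f) * c j) * (f j : ℤ)
        = Nat.gcdB (f i) (s.gcd f) * ∑ j ∈ s, c j * (f j : ℤ) := by
      rw [Finset.mul_sum]
      refine Finset.sum_congr rfl fun j hj => ?_
      rw [if_neg (by rintro rfl; exact hi hj)]; ring
    rw [h2]; beta_reduce; rw [if_pos rfl, h1, hb, ← hc]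
    ring

lemma cofinite {m : ℕ} (hm : 2 ≤ m) (a : Fin m → ℕ) (hpos : ∀ i, 0 < a i)
    (hgcd : Finset.univ.gcd a = 1) :
    ∃ N : ℕ, ∀ n, N ≤ n → ∃ x : Fin m → ℕ, ∑ i, x i * a i = n := by
  obtain ⟨c, hc⟩ := finset_bezout Finset.univ a
  rw [hgcd] at hc
  push_cast at hc
  have i0 : Fin m := ⟨0, by omega⟩
  set d := a i0 with hd
  have hd0 : 0 < d := hpos i0
  have hdZ : (0:ℤ) < (d:ℤ) := by exact_mod_cast hd0
  refine ⟨d * ∑ i, a i, fun n hn => ?_⟩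
  set z : Fin m → ℤ := fun i => (n * c i) % d with hz
  have hz0 : ∀ i, 0 ≤ z i := fun i => Int.emod_nonneg _ (by omega)
  have hzd : ∀ i, z i < d := fun i => Int.emod_lt_of_pos _ hdZ
  set x : Fin m → ℕ := fun i => (z i).toNat with hx
  have hxz : ∀ i, (x i : ℤ) = z i := fun i => Int.toNat_of_nonneg (hz0 i)
  have hxd : ∀ i, x i < d := fun i => by
    have := hzd i; have := hxz i; omega
  set S0 := ∑ i, x i * a i with hS0
  have hS0n : S0 < d * ∑ i, a i := by
    calc S0 < ∑ i, d * a i := by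
          apply Finset.sum_lt_sum_of_nonempty
          · exact Finset.univ_nonempty_iff.mpr ⟨i0⟩
          · intro i _
            exact Nat.mul_lt_mul_of_lt_of_le (hxd i) le_rfl (hpos i)
      _ = d * ∑ i, a i := by rw [Finset.mul_sum]
  have hS0le : S0 ≤ n := le_of_lt (lt_of_lt_of_le hS0n hn)
  have hdvd : (d:ℤ) ∣ (n : ℤ) - (S0 : ℤ) := by
    have h1 : (n : ℤ) - S0 = ∑ i, ((n : ℤ) * c i - z i) * a i := by
      have h2 : (n : ℤ) = ∑ i, (n : ℤ) * c i * a i := by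
        calc (n:ℤ) = n * ∑ i, c i * (a i : ℤ) := by rw [← hc]; ring
          _ = ∑ i, (n:ℤ) * c i * a i := by
              rw [Finset.mul_sum]; exact Finset.sum_congr rfl fun i _ => by ring
      have h3 : (S0 : ℤ) = ∑ i, z i * a i := by
        rw [hS0]; push_cast; exact Finset.sum_congr rfl fun i _ => by rw [hxz]
      have h4 : ∑ i, ((n:ℤ) * c i - z i) * (a i:ℤ)
          = (∑ i, (n:ℤ)*c i*(a i:ℤ)) - ∑ i, z i * (a i:ℤ) := by
        rw [← Finset.sum_sub_distrib]
        exact Finset.sum_congr rfl fun i _ => by ring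
      rw [h4, ← h2, ← h3]
    rw [h1]
    refine Finset.dvd_sum fun i _ => Dvd.dvd.mul_right ?_ _
    have : z i % d = z i := Int.emod_emod_of_dvd _ dvd_rfl
    have h4 : ((n:ℤ) * c i - z i) % d = 0 := by
      rw [Int.sub_emod, this, hz, Int.sub_self, Int.zero_emod]
    exact Int.dvd_of_emod_eq_zero h4
  have hdvdN : d ∣ n - S0 := by
    have : ((n - S0 : ℕ) : ℤ) = (n:ℤ) - S0 := by push_cast [hS0le]; ring
    exact_mod_cast this ▸ hdvd
  obtain ⟨q, hq⟩ := hdvdN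
  refine ⟨Function.update x i0 (x i0 + q), ?_⟩
  rw [← Finset.sum_erase_add _ _ (Finset.mem_univ i0)]
  have e1 : ∑ i ∈ Finset.univ.erase i0, Function.update x i0 (x i0 + q) i * a i
      = ∑ i ∈ Finset.univ.erase i0, x i * a i :=
    Finset.sum_congr rfl fun i hi => by rw [Function.update_of_ne (Finset.ne_of_mem_erase hi)]
  have e2 : ∑ i ∈ Finset.univ.erase i0, x i * a i + x i0 * a i0 = S0 :=
    Finset.sum_erase_add _ _ (Finset.mem_univ i0)
  have key : S0 + d * q = n := by rw [← hq]; omega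
  rw [e1, Function.update_self,
    show (x i0 + q) * a i0 = x i0 * a i0 + d * q from by rw [hd]; ring,
    ← add_assoc, e2, key]

lemma gt_frob (S : AddSubmonoid ℕ) (N : ℕ) (hcof : ∀ n, N ≤ n → n ∈ S) :
    ∀ n, sSup {n : ℕ | n ∉ S} < n → n ∈ S := by
  intro n hn
  by_contra hns
  have hbdd : BddAbove {n : ℕ | n ∉ S} := by
    refine ⟨N, fun y hy => ?_⟩
    by_contra hyN
    exact hy (hcof y (le_of_not_ge hyN))
  exact absurd (le_csSup hbdd hns) (not_le.mpr hn)

lemma apery {k : ℕ} (a : Fin (k+1) → ℕ) (hpos : ∀ i, 0 < a i)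
    (F : ℕ)
    (hS : ∀ n, F < n → ∃ x : Fin (k+1) → ℕ, ∑ i, x i * a i = n)
    (r : ℕ) (hr : r < a (Fin.last k)) :
    ∃ x : Fin k → ℕ, (∑ i, x i * a i.castSucc) % (a (Fin.last k)) = r ∧
      ∑ i, x i * a i.castSucc ≤ F + a (Fin.last k) := by
  set A := a (Fin.last k) with hA
  have hA0 : 0 < A := hpos _
  -- find n with F < n ≤ F + A and n % A = r
  obtain ⟨n, hn1, hn2, hn3⟩ : ∃ n, F < n ∧ n ≤ F + A ∧ n % A = r := by
    set t := (F + 1) % A with ht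
    have htA : t < A := Nat.mod_lt _ hA0
    by_cases hc : t ≤ r
    · refine ⟨F + 1 + (r - t), by omega, by omega, ?_⟩
      rw [Nat.add_mod, ← ht, Nat.mod_eq_of_lt (by omega : r - t < A), Nat.mod_eq_of_lt]
      · omega
      · omega
    · refine ⟨F + 1 + (A + r - t), by omega, by omega, ?_⟩
      rw [Nat.add_mod, ← ht, Nat.mod_eq_of_lt (by omega : A + r - t < A)]
      have : t + (A + r - t) = A + r := by omega
      rw [this, Nat.add_mod_left, Nat.mod_eq_of_lt hr]
  set T := {s : ℕ | s % A = r ∧ ∃ x : Fin (k+1) → ℕ, ∑ i, x i * a i = s} with hT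
  have hnT : n ∈ T := ⟨hn3, hS n hn1⟩
  have hTne : T.Nonempty := ⟨n, hnT⟩
  set t0 := sInf T with ht0
  have ht0T : t0 ∈ T := Nat.sInf_mem hTne
  have ht0n : t0 ≤ n := Nat.sInf_le hnT
  obtain ⟨ht0r, c, hc⟩ := ht0T
  have hclast : c (Fin.last k) = 0 := by
    by_contra hcl
    have hcl1 : 1 ≤ c (Fin.last k) := Nat.one_le_iff_ne_zero.mpr hcl
    have hAt0 : A ≤ t0 := by
      calc A = 1 * A := (one_mul A).symm
        _ ≤ c (Fin.last k) * a (Fin.last k) := Nat.mul_le_mul hcl1 le_rfl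
        _ ≤ ∑ i, c i * a i := Finset.single_le_sum (f := fun i => c i * a i)
            (fun i _ => Nat.zero_le _) (Finset.mem_univ _)
        _ = t0 := hc
    have hmem : t0 - A ∈ T := by
      constructor
      · have : (t0 - A + A) % A = (t0 - A) % A := Nat.add_mod_right _ _
        rw [Nat.sub_add_cancel hAt0] at this
        rw [← this, ht0r]
      · refine ⟨Function.update c (Fin.last k) (c (Fin.last k) - 1), ?_⟩
        rw [← Finset.sum_erase_add _ _ (Finset.mem_univ (Fin.last k)),
          Function.update_self,
          Finset.sum_congr rfl (fun i hi => by
            rw [Function.update_of_ne (Finset.ne_of_mem_erase hi)])]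
        rw [← Finset.sum_erase_add _ _ (Finset.mem_univ (Fin.last k))] at hc
        have h5 : (c (Fin.last k) - 1) * a (Fin.last k)
            = c (Fin.last k) * a (Fin.last k) - a (Fin.last k) := Nat.sub_one_mul _ _
        have h6 : a (Fin.last k) ≤ c (Fin.last k) * a (Fin.last k) :=
          Nat.le_mul_of_pos_left _ hcl1
        omega
    have := Nat.sInf_le hmem
    omega
  refine ⟨fun i => c i.castSucc, ?_, ?_⟩
  · have hsum : ∑ i : Fin k, c i.castSucc * a i.castSucc = t0 := by
      rw [← hc, Fin.sum_univ_castSucc, hclast]; simp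
    rw [hsum, ht0r]
  · have hsum : ∑ i : Fin k, c i.castSucc * a i.castSucc = t0 := by
      rw [← hc, Fin.sum_univ_castSucc, hclast]; simp
    simpa only [hsum] using ht0n.trans hn2

private def psum {k : ℕ} (y : Fin k → ℕ) (i : Fin k) : ℕ :=
  (∑ i' ∈ Finset.Iic i, y i') + i

private lemma psum_strictMono {k : ℕ} (y : Fin k → ℕ) : StrictMono (psum y) := by
  intro i j hij
  unfold psum
  have h1 : ∑ i' ∈ Finset.Iic i, y i' ≤ ∑ i' ∈ Finset.Iic j, y i' :=
    Finset.sum_le_sum_of_subset (Finset.Iic_subset_Iic.mpr hij.le)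
  have : (i : ℕ) < j := hij
  omega

private lemma psum_lt {k : ℕ} (y : Fin k → ℕ) (U : ℕ) (hy : ∑ i, y i ≤ U) (i : Fin k) :
    psum y i < U + k := by
  unfold psum
  have h1 : ∑ i' ∈ Finset.Iic i, y i' ≤ ∑ i', y i' :=
    Finset.sum_le_sum_of_subset (Finset.subset_univ _)
  have : (i : ℕ) < k := i.isLt
  omega

private lemma psum_inj {k : ℕ} {y y' : Fin k → ℕ} (h : psum y = psum y') : y = y' := by
  have key : ∀ n : ℕ, ∀ i : Fin k, (i : ℕ) = n → y i = y' i := by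
    intro n
    induction n using Nat.strongRecOn with
    | ind n IH =>
      intro i hi
      have hci := congrFun h i
      unfold psum at hci
      have hIio : ∑ i' ∈ Finset.Iio i, y i' = ∑ i' ∈ Finset.Iio i, y' i' :=
        Finset.sum_congr rfl fun j hj => by
          have hji : j < i := Finset.mem_Iio.mp hj
          exact IH (j : ℕ) (by omega) j rfl
      rw [← Finset.Iio_insert, Finset.sum_insert (Finset.notMem_Iio_self),
        Finset.sum_insert (Finset.notMem_Iio_self), hIio] at hci
      omega
  funext i
  exact key (i : ℕ) i rfl

private lemma count_lemma {k : ℕ} (a' : Fin k → ℕ) (ha' : ∀ i, 0 < a' i) (A B : ℕ)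
    (g : Fin A → Fin k → ℕ)
    (hg : ∀ r, (∑ i, g r i * a' i) % A = (r : ℕ))
    (hgb : ∀ r, ∑ i, g r i * a' i ≤ B) :
    A * ∏ i, a' i ≤ (B + ∑ i, a' i).choose k := by
  set U := B + ∑ i, (a' i - 1) with hUdef
  have hU : U + k = B + ∑ i, a' i := by
    have h7 : ∑ i : Fin k, (a' i - 1) + ∑ _i : Fin k, 1 = ∑ i : Fin k, a' i := by
      rw [← Finset.sum_add_distrib]
      exact Finset.sum_congr rfl fun i _ => by have := ha' i; omega
    simp only [Finset.sum_const, Finset.card_univ, Fintype.card_fin, smul_eq_mul,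
      mul_one] at h7
    omega
  rw [← hU]
  -- the y-vector attached to (r, b)
  set yv : Fin A → (∀ i : Fin k, Fin (a' i)) → Fin k → ℕ :=
    fun r b i => g r i * a' i + (b i : ℕ) with hyv
  have hyU : ∀ r b, ∑ i, yv r b i ≤ U := by
    intro r b
    rw [hUdef, Finset.sum_add_distrib]
    have h1 : ∑ i, (b i : ℕ) ≤ ∑ i, (a' i - 1) :=
      Finset.sum_le_sum fun i _ => by have := (b i).isLt; omega
    have := hgb r
    omega
  have hcard : ∀ r b, (Finset.univ.image (psum (yv r b))).card = k := by
    intro r b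
    rw [Finset.card_image_of_injective _ (psum_strictMono (yv r b)).injective,
      Finset.card_univ, Fintype.card_fin]
  have hmem : ∀ r b, Finset.univ.image (psum (yv r b)) ∈
      Finset.powersetCard k (Finset.range (U + k)) := by
    intro r b
    rw [Finset.mem_powersetCard]
    refine ⟨fun x hx => ?_, hcard r b⟩
    obtain ⟨i, _, rfl⟩ := Finset.mem_image.mp hx
    exact Finset.mem_range.mpr (psum_lt _ _ (hyU r b) i)
  have hinj : Function.Injective
      (fun rb : Fin A × (∀ i : Fin k, Fin (a' i)) =>
        (⟨Finset.univ.image (psum (yv rb.1 rb.2)), hmem rb.1 rb.2⟩ :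
          {s // s ∈ Finset.powersetCard k (Finset.range (U + k))})) := by
    rintro ⟨r, b⟩ ⟨r', b'⟩ hrb
    simp only [Subtype.mk.injEq] at hrb
    -- the two strict monos have the same image, hence are equal
    have hp : psum (yv r b) = psum (yv r' b') := by
      have h1 := Finset.orderEmbOfFin_unique (hcard r' b')
        (fun i => hrb ▸ Finset.mem_image_of_mem _ (Finset.mem_univ i)) (psum_strictMono (yv r b))
      have h2 := Finset.orderEmbOfFin_unique (hcard r' b')
        (fun i => Finset.mem_image_of_mem _ (Finset.mem_univ i)) (psum_strictMono (yv r' b'))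
      exact funext fun i => (congrFun h1 i).trans (congrFun h2 i).symm
    have hy : yv r b = yv r' b' := psum_inj hp
    have hbi : ∀ i, (b i : ℕ) = (b' i : ℕ) := by
      intro i
      have := congrFun hy i
      simp only [hyv] at this
      have e1 : (g r i * a' i + (b i : ℕ)) % a' i = (b i : ℕ) := by
        rw [add_comm, Nat.add_mul_mod_self_right, Nat.mod_eq_of_lt (b i).isLt]
      have e2 : (g r' i * a' i + (b' i : ℕ)) % a' i = (b' i : ℕ) := by
        rw [add_comm, Nat.add_mul_mod_self_right, Nat.mod_eq_of_lt (b' i).isLt]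
      rw [← e1, ← e2, this]
    have hgi : ∀ i, g r i = g r' i := by
      intro i
      have := congrFun hy i
      simp only [hyv] at this
      have := hbi i
      have ha := ha' i
      have : g r i * a' i = g r' i * a' i := by omega
      exact Nat.eq_of_mul_eq_mul_right ha this
    have hr : r = r' := by
      have hsum : ∑ i, g r i * a' i = ∑ i, g r' i * a' i :=
        Finset.sum_congr rfl fun i _ => by rw [hgi i]
      have h1 := hg r
      have h2 := hg r'
      rw [hsum, h2] at h1
      exact Fin.ext h1.symm
    refine Prod.ext hr ?_
    funext i
    exact Fin.ext (by rw [hbi i])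
  have hle := Fintype.card_le_of_injective _ hinj
  rw [Fintype.card_coe, Finset.card_powersetCard, Finset.card_range] at hle
  simpa using hle

lemma nat_bound {k : ℕ} (hk : 1 ≤ k) (a : Fin (k+1) → ℕ) (hpos : ∀ i, 0 < a i)
    (hgcd : Finset.univ.gcd a = 1) :
    k.factorial * ∏ i, a i ≤
      (frobNum (AddSubmonoid.closure (Set.range a)) + ∑ i, a i) ^ k := by
  set S := AddSubmonoid.closure (Set.range a) with hSdef
  set F := frobNum S with hF
  obtain ⟨N, hN⟩ := cofinite (by omega) a hpos hgcd
  have hS : ∀ n, F < n → ∃ x : Fin (k+1) → ℕ, ∑ i, x i * a i = n := by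
    intro n hn
    exact (mem_closure_iff_rep a n).mp
      (gt_frob S N (fun n hn => (mem_closure_iff_rep a n).mpr (hN n hn)) n hn)
  set A := a (Fin.last k) with hA
  set a' : Fin k → ℕ := fun i => a i.castSucc with ha'def
  have ha' : ∀ i, 0 < a' i := fun i => hpos _
  set g : Fin A → Fin k → ℕ := fun r => (apery a hpos F hS r r.isLt).choose with hgdef
  have hg : ∀ r : Fin A, (∑ i, g r i * a' i) % A = (r : ℕ) :=
    fun r => (apery a hpos F hS r r.isLt).choose_spec.1
  have hgb : ∀ r : Fin A, ∑ i, g r i * a' i ≤ F + A :=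
    fun r => (apery a hpos F hS r r.isLt).choose_spec.2
  have hcount := count_lemma a' ha' A (F + A) g hg hgb
  have hprod : ∏ i, a i = (∏ i, a' i) * A := by
    rw [Fin.prod_univ_castSucc]
  have hsum : F + ∑ i, a i = F + A + ∑ i, a' i := by
    rw [Fin.sum_univ_castSucc]; simp only [ha'def]; omega
  calc k.factorial * ∏ i, a i = k.factorial * (A * ∏ i, a' i) := by rw [hprod]; ring
    _ ≤ k.factorial * (F + A + ∑ i, a' i).choose k :=
        Nat.mul_le_mul_left _ hcount
    _ = (F + A + ∑ i, a' i).descFactorial k :=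
        (Nat.descFactorial_eq_factorial_mul_choose _ _).symm
    _ ≤ (F + A + ∑ i, a' i) ^ k := Nat.descFactorial_le_pow _ _
    _ = (F + ∑ i, a i) ^ k := by rw [hsum]

theorem frobenius_lower_bound (m : ℕ) (hm : 2 ≤ m) (a : Fin m → ℕ)
    (hpos : ∀ i, 0 < a i) (hgcd : Finset.univ.gcd a = 1) :
    ((Nat.factorial (m - 1) : ℝ) * ∏ i, (a i : ℝ)) ^ ((1 : ℝ) / (m - 1 : ℝ)) -
        ∑ i, (a i : ℝ) ≤
      (frobNum (AddSubmonoid.closure (Set.range a)) : ℝ) := by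
  obtain ⟨k, rfl⟩ : ∃ k, m = k + 1 := ⟨m - 1, by omega⟩
  have hk : 1 ≤ k := by omega
  have hk0 : (k : ℝ) ≠ 0 := by exact_mod_cast Nat.one_le_iff_ne_zero.mp hk
  have hnb := nat_bound hk a hpos hgcd
  set F := frobNum (AddSubmonoid.closure (Set.range a)) with hF
  have e0 : k + 1 - 1 = k := rfl
  have e1 : ((k + 1 : ℕ) : ℝ) - 1 = (k : ℝ) := by push_cast; ring
  rw [e0, e1]
  have hP : (Nat.factorial k : ℝ) * ∏ i, (a i : ℝ) = ((k.factorial * ∏ i, a i : ℕ) : ℝ) := by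
    push_cast; ring
  rw [hP]
  have h0 : (0:ℝ) ≤ ((k.factorial * ∏ i, a i : ℕ) : ℝ) := Nat.cast_nonneg _
  have hR0 : (0:ℝ) ≤ ((F + ∑ i, a i : ℕ) : ℝ) := Nat.cast_nonneg _
  have hle : ((k.factorial * ∏ i, a i : ℕ) : ℝ) ≤ ((F + ∑ i, a i : ℕ) : ℝ) ^ (k : ℕ) := by
    exact_mod_cast hnb
  have key : (((k.factorial * ∏ i, a i : ℕ) : ℝ)) ^ ((1:ℝ)/(k:ℝ)) ≤
      ((F + ∑ i, a i : ℕ) : ℝ) := by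
    have h1 := Real.rpow_le_rpow h0 hle (by positivity : (0:ℝ) ≤ 1/(k:ℝ))
    rwa [← Real.rpow_natCast ((F + ∑ i, a i : ℕ) : ℝ) k, ← Real.rpow_mul hR0,
      mul_one_div, div_self hk0, Real.rpow_one] at h1
  have hc : ((F + ∑ i, a i : ℕ) : ℝ) = (F : ℝ) + ∑ i, (a i : ℝ) := by push_cast; ring
  rw [hc] at key
  linarith
end

section
/- For every positive integer k, there is no quadratic polynomial bound: explicitly, for each fixed k ≥ 1 there exists a constant C > 0 such that for all sufficiently large n, F(⟨n², (n+1)², …, (n+k)²⟩) ≥ C·n^{2(k+1)/k}; in particular F(⟨n²,…,(n+k)²⟩)/n² → ∞ as n → ∞. -/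
/-- The numerical semigroup generated by the `k+1` consecutive squares
`n², (n+1)², …, (n+k)²`. -/
def squaresSgp (n k : ℕ) : AddSubmonoid ℕ :=
  AddSubmonoid.closure {x : ℕ | ∃ i ≤ k, x = (n + i) ^ 2}

lemma mem_of_repr (n k : ℕ) (c : Fin (k+1) → ℕ) :
    (∑ i, c i * (n + (i:ℕ)) ^ 2) ∈ squaresSgp n k := by
  apply AddSubmonoid.sum_mem
  intro i _
  have h : (n + (i:ℕ)) ^ 2 ∈ squaresSgp n k :=
    AddSubmonoid.subset_closure ⟨i, Nat.lt_succ_iff.mp i.2, rfl⟩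
  simpa [smul_eq_mul] using AddSubmonoid.nsmul_mem (squaresSgp n k) h (c i)

lemma repr_of_mem {n k m : ℕ} (h : m ∈ squaresSgp n k) :
    ∃ c : Fin (k+1) → ℕ, m = ∑ i, c i * (n + (i:ℕ)) ^ 2 := by
  let R : AddSubmonoid ℕ :=
    { carrier := {m | ∃ c : Fin (k+1) → ℕ, m = ∑ i, c i * (n + (i:ℕ)) ^ 2}
      zero_mem' := ⟨0, by simp⟩
      add_mem' := by
        rintro a b ⟨c, hc⟩ ⟨d, hd⟩
        exact ⟨c + d, by simp [hc, hd, add_mul, Finset.sum_add_distrib]⟩ }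
  have : squaresSgp n k ≤ R := by
    rw [squaresSgp, AddSubmonoid.closure_le]
    rintro x ⟨i, hi, rfl⟩
    exact ⟨Pi.single ⟨i, Nat.lt_succ_of_le hi⟩ 1, by
      rw [Finset.sum_eq_single (⟨i, Nat.lt_succ_of_le hi⟩ : Fin (k+1))] <;> simp +contextual [Pi.single_apply]⟩
  exact this h

lemma mem_of_large {n k m : ℕ} (hn : 2 ≤ n) (hk : 1 ≤ k)
    (hm : n^2 * (n+1)^2 ≤ m) : m ∈ squaresSgp n k := by
  have cop : Nat.Coprime (n^2) ((n+1)^2) := by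
    have h : Nat.Coprime n (n+1) := by simp
    exact Nat.Coprime.pow 2 2 h
  have h2 : 1 < n^2 := by nlinarith
  have h3 : 1 < (n+1)^2 := by nlinarith
  have hF := frobeniusNumber_pair cop h2 h3
  have hmem : m ∈ AddSubmonoid.closure ({n^2, (n+1)^2} : Set ℕ) := by
    by_contra hcon
    have h4 := hF.2 hcon
    have h5 : n^2 + (n+1)^2 ≤ n^2*(n+1)^2 := by nlinarith
    omega
  refine AddSubmonoid.closure_mono ?_ hmem
  rintro x (rfl | rfl)
  · exact ⟨0, Nat.zero_le _, by simp⟩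
  · exact ⟨1, hk, by simp⟩

lemma bdd (n k : ℕ) (hn : 2 ≤ n) (hk : 1 ≤ k) :
    BddAbove {m : ℕ | m ∉ squaresSgp n k} := by
  refine ⟨n^2 * (n+1)^2, fun m hm => ?_⟩
  by_contra h
  exact hm (mem_of_large hn hk (by omega))

open Classical in
lemma count_le (n k T : ℕ) (hn : 1 ≤ n) :
    ((Finset.Iic T).filter (fun m => m ∈ squaresSgp n k)).card ≤ (T / n^2 + 1)^(k+1) := by
  set B := T / n^2 with hB
  set crep : ℕ → Fin (k+1) → ℕ := fun m =>
    if h : ∃ c : Fin (k+1) → ℕ, m = ∑ i, c i * (n + (i:ℕ)) ^ 2 then h.choose else 0 with hcrep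
  have hspec : ∀ m ∈ (Finset.Iic T).filter (fun m => m ∈ squaresSgp n k),
      m = ∑ i, crep m i * (n + (i:ℕ)) ^ 2 ∧ ∀ i, crep m i ≤ B := by
    intro m hm
    simp only [Finset.mem_filter, Finset.mem_Iic] at hm
    have hex := repr_of_mem hm.2
    have heq : m = ∑ i, crep m i * (n + (i:ℕ)) ^ 2 := by
      rw [hcrep]; simp only [hex, dif_pos]; exact hex.choose_spec
    refine ⟨heq, fun i => ?_⟩
    have h1 : crep m i * n ^ 2 ≤ m := by
      calc crep m i * n ^ 2 ≤ crep m i * (n + (i:ℕ)) ^ 2 := by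
            exact Nat.mul_le_mul_left _ (Nat.pow_le_pow_left (by omega) 2)
        _ ≤ ∑ j, crep m j * (n + (j:ℕ)) ^ 2 :=
            Finset.single_le_sum (f := fun j : Fin (k+1) => crep m j * (n + (j:ℕ)) ^ 2) (fun j _ => Nat.zero_le _) (Finset.mem_univ i)
        _ = m := heq.symm
    rw [hB]
    exact Nat.le_div_iff_mul_le (by positivity) |>.mpr (h1.trans hm.1)
  have hcard : ((Finset.Iic T).filter (fun m => m ∈ squaresSgp n k)).card ≤
      Fintype.card (Fin (k+1) → Fin (B+1)) := by
    rw [← Finset.card_univ]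
    apply Finset.card_le_card_of_injOn
      (fun m => (fun i => ⟨crep m i % (B+1), Nat.mod_lt _ (Nat.succ_pos B)⟩ : Fin (k+1) → Fin (B+1)))
      (fun m _ => Finset.mem_univ _)
    intro m hm m' hm' hf
    obtain ⟨heq, hle⟩ := hspec m hm
    obtain ⟨heq', hle'⟩ := hspec m' hm'
    have : ∀ i, crep m i = crep m' i := by
      intro i
      have := congrFun hf i
      simpa [Nat.mod_eq_of_lt (Nat.lt_succ_of_le (hle i)),
        Nat.mod_eq_of_lt (Nat.lt_succ_of_le (hle' i)), Fin.ext_iff] using this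
    rw [heq, heq']
    exact Finset.sum_congr rfl fun i _ => by rw [this i]
  simpa using hcard

lemma nat_div_real_lb (a b : ℕ) (hb : 0 < b) : (a:ℝ)/b - 1 ≤ ((a / b : ℕ) : ℝ) := by
  have h2 := Nat.mod_lt a hb
  have h : a < b * (a/b) + b := by have := Nat.div_add_mod a b; omega
  have hb' : (0:ℝ) < b := by positivity
  have hc : (a:ℝ) < b * ((a/b : ℕ):ℝ) + b := by exact_mod_cast h
  rw [sub_le_iff_le_add, div_le_iff₀ hb']
  nlinarith


open Classical in
lemma key (k n s : ℕ) (hk : 1 ≤ k) (hn : 2 ≤ n) (hs : s^k ≤ n) (hs2 : 2^(k+2) ≤ s^2) :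
    ((n:ℝ)^2 * (s:ℝ)^2) / 2^(k+4) ≤ (frobNum (squaresSgp n k) : ℝ) := by
  set F := frobNum (squaresSgp n k) with hF
  set T := n^2 * s^2 / 2^(k+2) with hT
  have habove : ∀ m, F < m → m ∈ squaresSgp n k := by
    intro m hm
    by_contra h
    exact absurd (le_csSup (bdd n k hn hk) h) (not_le.mpr hm)
  have hsub : Finset.Ioc F T ⊆ (Finset.Iic T).filter (fun m => m ∈ squaresSgp n k) := by
    intro m hm
    rw [Finset.mem_Ioc] at hm
    exact Finset.mem_filter.mpr ⟨Finset.mem_Iic.mpr hm.2, habove m hm.1⟩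
  have hcount : T - F ≤ (T / n^2 + 1)^(k+1) := by
    calc T - F = (Finset.Ioc F T).card := (Nat.card_Ioc F T).symm
      _ ≤ _ := Finset.card_le_card hsub
      _ ≤ _ := count_le n k T (by omega)
  have hdiv : T / n^2 = s^2 / 2^(k+2) := by
    rw [hT, Nat.div_div_eq_div_mul, mul_comm ((2:ℕ)^(k+2)) (n^2),
      Nat.mul_div_mul_left _ _ (by positivity)]
  set A : ℝ := 2^(k+2) with hA
  have hApos : (0:ℝ) < A := by positivity
  have hS2 : A ≤ (s:ℝ)^2 := by rw [hA]; exact_mod_cast hs2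
  have hD : ((T / n^2 : ℕ) : ℝ) + 1 ≤ 2 * ((s:ℝ)^2 / A) := by
    rw [hdiv]
    have h1 : ((s^2 / 2^(k+2) : ℕ) : ℝ) ≤ (s:ℝ)^2 / A := by
      rw [hA]
      calc ((s^2 / 2^(k+2) : ℕ) : ℝ) ≤ ((s^2:ℕ):ℝ) / (((2:ℕ)^(k+2):ℕ):ℝ) := Nat.cast_div_le
        _ = (s:ℝ)^2 / 2^(k+2) := by push_cast; ring
    have h2 : (1:ℝ) ≤ (s:ℝ)^2 / A := (one_le_div hApos).mpr hS2
    linarith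
  have hpow : (2 * ((s:ℝ)^2 / A))^(k+1) ≤ (n:ℝ)^2 * (s:ℝ)^2 / (2 * A) := by
    have e1 : 2 * ((s:ℝ)^2 / A) = (s:ℝ)^2 / 2^(k+1) := by
      rw [hA, pow_succ]; field_simp; ring
    rw [e1, div_pow, ← pow_mul]
    have e3 : (s:ℝ)^(2*(k+1)) ≤ (n:ℝ)^2 * (s:ℝ)^2 := by
      have h5 : (s:ℝ)^k ≤ (n:ℝ) := by exact_mod_cast hs
      have h0 : (0:ℝ) ≤ (s:ℝ)^k := by positivity
      have : (s:ℝ)^(2*(k+1)) = ((s:ℝ)^k)^2 * (s:ℝ)^2 := by ring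
      rw [this]
      have h6 : ((s:ℝ)^k)^2 ≤ (n:ℝ)^2 := by nlinarith
      nlinarith [sq_nonneg (s:ℝ)]
    have e4 : (2*A : ℝ) ≤ ((2:ℝ)^(k+1))^(k+1) := by
      rw [hA, ← pow_mul, ← pow_succ']
      exact pow_le_pow_right₀ one_le_two (by nlinarith)
    exact div_le_div₀ (by positivity) e3 (by positivity) e4
  have hTlb : (n:ℝ)^2 * (s:ℝ)^2 / A - 1 ≤ (T:ℝ) := by
    have h7 := nat_div_real_lb (n^2 * s^2) (2^(k+2)) (by positivity)
    rw [← hT] at h7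
    have : ((n^2 * s^2 : ℕ):ℝ)/((2^(k+2):ℕ):ℝ) = (n:ℝ)^2 * (s:ℝ)^2 / A := by
      rw [hA]; push_cast; ring
    linarith [this ▸ h7]
  have hc : (T:ℝ) - F ≤ (2 * ((s:ℝ)^2 / A))^(k+1) := by
    have h1 : ((T - F : ℕ):ℝ) ≤ (((T / n^2 + 1)^(k+1) : ℕ):ℝ) := by exact_mod_cast hcount
    have h2 : (T:ℝ) - F ≤ ((T - F : ℕ):ℝ) := by
      rcases le_total F T with h | h
      · rw [Nat.cast_sub h]
      · have h3 : (T:ℝ) ≤ F := by exact_mod_cast h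
        have h4 : (0:ℝ) ≤ ((T-F:ℕ):ℝ) := by positivity
        linarith
    have h5 : (((T / n^2 + 1)^(k+1) : ℕ):ℝ) = (((T / n^2:ℕ):ℝ) + 1)^(k+1) := by push_cast; ring
    have h6 : (((T / n^2:ℕ):ℝ) + 1)^(k+1) ≤ (2 * ((s:ℝ)^2 / A))^(k+1) :=
      pow_le_pow_left₀ (by positivity) hD _
    linarith [h5 ▸ h1]
  -- combine
  set P : ℝ := (n:ℝ)^2 * (s:ℝ)^2 with hP
  have hgoal : (2:ℝ)^(k+4) = 4 * A := by rw [hA]; ring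
  have hP4 : 4 * A ≤ P := by
    have hn' : (2:ℝ) ≤ (n:ℝ) := by exact_mod_cast hn
    have : (4:ℝ) ≤ (n:ℝ)^2 := by nlinarith
    rw [hP]; nlinarith
  have hkey : P/A - P/(2*A) - P/(4*A) = P/(4*A) := by field_simp; ring
  have h1le : 1 ≤ P/(4*A) := (one_le_div (by positivity)).mpr hP4
  rw [hgoal]
  linarith

lemma part1_s19 (k : ℕ) (hk : 1 ≤ k) : ∀ n : ℕ, (2^(k+4))^k ≤ n →
    (1/2^(k+6) : ℝ) * (n : ℝ) ^ ((2 * ((k : ℝ) + 1)) / (k : ℝ)) ≤ (frobNum (squaresSgp n k) : ℝ) := by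
  intro n hN
  have hkR : (0:ℝ) < (k:ℝ) := by exact_mod_cast hk
  have hn2 : 2 ≤ n := by
    calc 2 ≤ 2^(k+4) := by have := Nat.one_lt_two_pow (n := k+4) (by omega); omega
      _ ≤ (2^(k+4))^k := Nat.le_self_pow (by omega) _
      _ ≤ n := hN
  have hnR : (0:ℝ) < (n:ℝ) := by exact_mod_cast (by omega : 0 < n)
  set x : ℝ := (n:ℝ) ^ ((k:ℝ)⁻¹) with hxdef
  have hx0 : 0 ≤ x := Real.rpow_nonneg hnR.le _
  have hxk : x ^ k = (n:ℝ) := by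
    rw [hxdef, ← Real.rpow_natCast ((n:ℝ) ^ ((k:ℝ)⁻¹)) k, ← Real.rpow_mul hnR.le,
      inv_mul_cancel₀ hkR.ne', Real.rpow_one]
  have hNx : ((2:ℝ)^(k+4)) ≤ x := by
    have hb : (0:ℝ) ≤ ((2^(k+4))^k : ℕ) := by positivity
    have h1 : (((2^(k+4))^k : ℕ):ℝ) ^ ((k:ℝ)⁻¹) ≤ x :=
      Real.rpow_le_rpow hb (by exact_mod_cast hN) (by positivity)
    have h2 : (((2^(k+4))^k : ℕ):ℝ) ^ ((k:ℝ)⁻¹) = (2:ℝ)^(k+4) := by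
      push_cast
      rw [← Real.rpow_natCast ((2:ℝ)^(k+4)) k, ← Real.rpow_mul (by positivity),
        mul_inv_cancel₀ hkR.ne', Real.rpow_one]
    rwa [h2] at h1
  set s : ℕ := ⌊x⌋₊ with hsdef
  have hsx : (s:ℝ) ≤ x := Nat.floor_le hx0
  have hs_ge : 2^(k+4) ≤ s := by
    apply Nat.le_floor
    push_cast
    exact hNx
  have hs1 : 1 ≤ s := by
    have : 1 ≤ 2^(k+4) := Nat.one_le_two_pow
    omega
  have hsk : s^k ≤ n := by
    have : (s:ℝ)^k ≤ x^k := pow_le_pow_left₀ (by positivity) hsx k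
    rw [hxk] at this
    exact_mod_cast this
  have hs2 : 2^(k+2) ≤ s^2 := by
    calc 2^(k+2) ≤ 2^((k+4)*2) := Nat.pow_le_pow_right (by norm_num) (by omega)
      _ = (2^(k+4))^2 := pow_mul 2 (k+4) 2
      _ ≤ s^2 := Nat.pow_le_pow_left hs_ge 2
  have hkey := key k n s hk hn2 hsk hs2
  -- now the rpow computation
  have hx2s : x ≤ 2 * s := by
    have h1 : x < s + 1 := Nat.lt_floor_add_one x
    have h2 : (1:ℝ) ≤ s := by exact_mod_cast hs1
    linarith
  have halpha : (2 * ((k : ℝ) + 1)) / (k : ℝ) = 2 + 2 * (k:ℝ)⁻¹ := by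
    field_simp
  have hna : (n : ℝ) ^ ((2 * ((k : ℝ) + 1)) / (k : ℝ)) = (n:ℝ)^2 * x^2 := by
    rw [halpha, Real.rpow_add hnR]
    congr 1
    · rw [show ((2:ℝ) = ((2:ℕ):ℝ)) by norm_num, Real.rpow_natCast]
    · rw [hxdef, ← Real.rpow_natCast ((n:ℝ) ^ ((k:ℝ)⁻¹)) 2, ← Real.rpow_mul hnR.le]
      congr 1
      push_cast
      ring
  rw [hna]
  have hbound : (n:ℝ)^2 * x^2 ≤ 4 * ((n:ℝ)^2 * (s:ℝ)^2) := by
    have h3 : x^2 ≤ (2*(s:ℝ))^2 := pow_le_pow_left₀ hx0 hx2s 2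
    nlinarith [sq_nonneg (n:ℝ), sq_nonneg (s:ℝ)]
  have hpow46 : (2:ℝ)^(k+6) = 2^(k+4) * 4 := by ring
  calc (1/2^(k+6) : ℝ) * ((n:ℝ)^2 * x^2) ≤ (1/2^(k+6) : ℝ) * (4 * ((n:ℝ)^2 * (s:ℝ)^2)) := by
        apply mul_le_mul_of_nonneg_left hbound (by positivity)
    _ = ((n:ℝ)^2 * (s:ℝ)^2) / 2^(k+4) := by rw [hpow46]; field_simp
    _ ≤ _ := hkey

theorem frobenius_consecutive_squares_growth (k : ℕ) (hk : 1 ≤ k) :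
    (∃ C : ℝ, 0 < C ∧ ∃ N : ℕ, ∀ n ≥ N,
        C * (n : ℝ) ^ ((2 * ((k : ℝ) + 1)) / (k : ℝ)) ≤ (frobNum (squaresSgp n k) : ℝ)) ∧
      Filter.Tendsto (fun n : ℕ => (frobNum (squaresSgp n k) : ℝ) / (n : ℝ) ^ 2)
        Filter.atTop Filter.atTop := by
  have hkR : (0:ℝ) < (k:ℝ) := by exact_mod_cast hk
  constructor
  · exact ⟨1/2^(k+6), by positivity, (2^(k+4))^k, part1_s19 k hk⟩
  · refine Filter.tendsto_atTop_mono' Filter.atTop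
      (f₁ := fun n : ℕ => (1/2^(k+6) : ℝ) * (n:ℝ) ^ ((2:ℝ)/(k:ℝ))) ?_ ?_
    · rw [Filter.EventuallyLE, Filter.eventually_atTop]
      refine ⟨max ((2^(k+4))^k) 1, fun n hn => ?_⟩
      have hn1 : 1 ≤ n := le_of_max_le_right hn
      have hnN := le_of_max_le_left hn
      have hnR : (0:ℝ) < (n:ℝ) := by exact_mod_cast hn1
      have h1 := part1_s19 k hk n hnN
      rw [le_div_iff₀ (by positivity : (0:ℝ) < (n:ℝ)^2)]
      calc (1/2^(k+6) : ℝ) * (n:ℝ) ^ ((2:ℝ)/(k:ℝ)) * (n:ℝ)^2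
          = (1/2^(k+6) : ℝ) * ((n:ℝ) ^ ((2:ℝ)/(k:ℝ)) * (n:ℝ) ^ ((2:ℕ):ℝ)) := by
            rw [Real.rpow_natCast]; ring
        _ = (1/2^(k+6) : ℝ) * (n:ℝ) ^ ((2 * ((k : ℝ) + 1)) / (k : ℝ)) := by
            rw [← Real.rpow_add hnR]
            congr 1
            push_cast
            field_simp
            ring
        _ ≤ _ := h1
    · have h2 : Filter.Tendsto (fun y : ℝ => y ^ ((2:ℝ)/(k:ℝ))) Filter.atTop Filter.atTop :=
        tendsto_rpow_atTop (by positivity)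
      have h3 : Filter.Tendsto (fun n : ℕ => ((n:ℝ)) ^ ((2:ℝ)/(k:ℝ))) Filter.atTop Filter.atTop :=
        h2.comp tendsto_natCast_atTop_atTop
      exact h3.const_mul_atTop (by positivity)
end
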